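/- arXiv:2206.08925 — 4 statements merged into one kernel-verified Lean document; each statement's English description precedes it below -/
import Mathlib

section
/- Let (λ,μ) and (ϑ,ω) be bipartitions of n with V_{(λ,μ)} ⊆ V_{(ϑ,ω)}. Then (ϑ,ω) ⊴ (λ,μ) in the bidominance order. -/
namespace SpechtBn

/-- `f` lists the parts of a partition (0-indexed: part `j+1` of the paper is `f j`),
with at most `n` parts. -/
def IsPartitionFun (n : ℕ) (f : ℕ → ℕ) : Prop :=
  Antitone f ∧ ∀ i, n ≤ i → f i = 0

/-- the pair of part functions `(f, g)` forms a bipartition of `n`. -/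
def IsBP (n : ℕ) (f g : ℕ → ℕ) : Prop :=
  IsPartitionFun n f ∧ IsPartitionFun n g ∧ (∑ i ∈ Finset.range n, (f i + g i)) = n

/-- A bipartition of `n`, given by the 0-indexed part functions of its two components. -/
structure Bipartition (n : ℕ) where
  l : ℕ → ℕ
  m : ℕ → ℕ
  isBP : IsBP n l m

/-- Bidominance on pairs of part functions: `(l₁,m₁) ⊴ (l₂,m₂)`. -/
def BidomFun (l₁ m₁ l₂ m₂ : ℕ → ℕ) : Prop :=
  (∀ k, ∑ j ∈ Finset.range k, (l₁ j + m₁ j) ≤ ∑ j ∈ Finset.range k, (l₂ j + m₂ j)) ∧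
  (∀ k, (∑ j ∈ Finset.range k, (l₁ j + m₁ j)) + l₁ k
      ≤ (∑ j ∈ Finset.range k, (l₂ j + m₂ j)) + l₂ k)

/-- `Bidom q p` : the bipartition `q` is bidominated by `p`, i.e. `q ⊴ p`. -/
def Bidom {n : ℕ} (q p : Bipartition n) : Prop := BidomFun q.l q.m p.l p.m

/-- Dominance order on part functions: `DomFun f g` means `f ⊴ g`. -/
def DomFun (f g : ℕ → ℕ) : Prop :=
  ∀ k, ∑ j ∈ Finset.range k, f j ≤ ∑ j ∈ Finset.range k, g j

/-- `g` covers `f` in the dominance order on partitions (of the same size, with ≤ `n` parts). -/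
def DomCovers (n : ℕ) (g f : ℕ → ℕ) : Prop :=
  IsPartitionFun n g ∧ IsPartitionFun n f ∧ DomFun f g ∧ f ≠ g ∧
  ∀ h : ℕ → ℕ, IsPartitionFun n h →
    (∑ j ∈ Finset.range n, h j) = (∑ j ∈ Finset.range n, f j) →
    DomFun f h → DomFun h g → h = f ∨ h = g

/-- `p` covers `q` in the bidominance order on bipartitions of `n`. -/
def BPCovers {n : ℕ} (p q : Bipartition n) : Prop :=
  Bidom q p ∧ q ≠ p ∧ ∀ r : Bipartition n, Bidom q r → Bidom r p → r = q ∨ r = p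

/-- number of positive parts of `f` (among the first `n`). -/
def lenF (n : ℕ) (f : ℕ → ℕ) : ℕ := ((Finset.range n).filter fun i => 1 ≤ f i).card

/-- the cells `(row, column)` of the Young diagram of `f` (0-indexed). -/
def cellsF (n : ℕ) (f : ℕ → ℕ) : Finset (ℕ × ℕ) :=
  (Finset.range n ×ˢ Finset.range n).filter fun c => c.2 < f c.1

/-- ordered pairs of cells lying in the same column, the first strictly above the second. -/
def colPairs (n : ℕ) (f : ℕ → ℕ) : Finset ((ℕ × ℕ) × (ℕ × ℕ)) :=
  ((cellsF n f) ×ˢ (cellsF n f)).filter fun q => q.1.2 = q.2.2 ∧ q.1.1 < q.2.1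

/-- A bitableau of shape `(f,g)`: a filling of the pair of Young diagrams with the
numbers `1,…,n` (here: the elements of `Fin n`), each used exactly once. -/
structure Bitableau (n : ℕ) (f g : ℕ → ℕ) where
  left : ℕ × ℕ → Fin n
  right : ℕ × ℕ → Fin n
  bij : ∀ k : Fin n, ∃! c : (ℕ × ℕ) ⊕ (ℕ × ℕ),
      Sum.elim (fun c => c ∈ cellsF n f ∧ left c = k)
               (fun c => c ∈ cellsF n g ∧ right c = k) c

/-- A tableau of shape `f`: a filling of the Young diagram of `f` with the elements
of `Fin n`, each used exactly once. -/
structure Tableau (n : ℕ) (f : ℕ → ℕ) where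
  entry : ℕ × ℕ → Fin n
  bij : ∀ k : Fin n, ∃! c : ℕ × ℕ, c ∈ cellsF n f ∧ entry c = k

open MvPolynomial in
/-- The `B_n`-Specht polynomial of a bitableau. -/
noncomputable def speB (n : ℕ) (K : Type*) [CommRing K] {f g : ℕ → ℕ}
    (bt : Bitableau n f g) : MvPolynomial (Fin n) K :=
  (∏ q ∈ colPairs n f, (X (bt.left q.1) ^ 2 - X (bt.left q.2) ^ 2)) *
  (∏ q ∈ colPairs n g, (X (bt.right q.1) ^ 2 - X (bt.right q.2) ^ 2)) *
  ∏ c ∈ cellsF n g, X (bt.right c)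

open MvPolynomial in
/-- The `S_n`-Specht polynomial of a tableau. -/
noncomputable def speSn (n : ℕ) (K : Type*) [CommRing K] {f : ℕ → ℕ}
    (U : Tableau n f) : MvPolynomial (Fin n) K :=
  ∏ q ∈ colPairs n f, (X (U.entry q.1) - X (U.entry q.2))

/-- The set of all `B_n`-Specht polynomials of shape `(f,g)`. -/
def spechtSet (n : ℕ) (K : Type*) [CommRing K] (f g : ℕ → ℕ) :
    Set (MvPolynomial (Fin n) K) :=
  {P | ∃ bt : Bitableau n f g, P = speB n K bt}

/-- The `B_n`-Specht ideal of shape `(f,g)`. -/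
noncomputable def spechtIdeal (n : ℕ) (K : Type*) [CommRing K] (f g : ℕ → ℕ) :
    Ideal (MvPolynomial (Fin n) K) :=
  Ideal.span (spechtSet n K f g)

/-- The `B_n`-Specht variety of shape `(f,g)`. -/
def spechtVariety (n : ℕ) (K : Type*) [CommRing K] (f g : ℕ → ℕ) : Set (Fin n → K) :=
  {z | ∀ P ∈ spechtIdeal n K f g, MvPolynomial.eval z P = 0}

/-- The `S_n`-orbit type of `z`: the multiplicities of the distinct values occurring among
the coordinates of `z`, sorted decreasingly (0-indexed part function). -/
noncomputable def snType {K : Type*} {n : ℕ} (z : Fin n → K) : ℕ → ℕ := fun j =>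
  letI := Classical.decEq K
  (((Finset.univ.image z).val.map fun v =>
      (Finset.univ.filter fun i => z i = v).card).sort (· ≤ ·)).reverse.getD j 0

/-- The index `j-1` (0-indexed) used in the definition of the `t`-cut. -/
def cutIdx (n : ℕ) (f : ℕ → ℕ) (t : ℕ) : ℕ :=
  ((Finset.range n).filter fun i => t ≤ f i ∧ 1 ≤ f i).card

/-- First component `ρ` of the `t`-cut of `f`. -/
def cutFst (n : ℕ) (f : ℕ → ℕ) (t : ℕ) : ℕ → ℕ :=
  fun i => if i < cutIdx n f t then t else f i

/-- Second component `σ` of the `t`-cut of `f`. -/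
def cutSnd (n : ℕ) (f : ℕ → ℕ) (t : ℕ) : ℕ → ℕ :=
  fun i => if i < cutIdx n f t then f i - t else 0

/-- the number of zero coordinates of `z`. -/
noncomputable def zeroCount {K : Type*} [Zero K] {n : ℕ} (z : Fin n → K) : ℕ :=
  letI := Classical.decEq K
  (Finset.univ.filter fun i => z i = 0).card

/-- First component of the `B_n`-orbit type `Ω(z) = cut(Λ(z²), t_z)`. -/
noncomputable def omegaFst {K : Type*} [CommRing K] {n : ℕ} (z : Fin n → K) : ℕ → ℕ :=
  cutFst n (snType fun i => z i ^ 2) (zeroCount z)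

/-- Second component of the `B_n`-orbit type `Ω(z) = cut(Λ(z²), t_z)`. -/
noncomputable def omegaSnd {K : Type*} [CommRing K] {n : ℕ} (z : Fin n → K) : ℕ → ℕ :=
  cutSnd n (snType fun i => z i ^ 2) (zeroCount z)

/-- The `B_n`-orbit set `H_{(f,g)}`. -/
def orbitSet (n : ℕ) (K : Type*) [CommRing K] (f g : ℕ → ℕ) : Set (Fin n → K) :=
  {z | omegaFst z = f ∧ omegaSnd z = g}

/-- `τ` is a vector of signs. -/
def IsSigns {n : ℕ} {K : Type*} [One K] [Neg K] (τ : Fin n → K) : Prop :=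
  ∀ i, τ i = 1 ∨ τ i = -1

/-- The action of the element `(τ, ρ)` of the hyperoctahedral group `B_n` on polynomials,
sending `x_i` to `τ(ρ(i))·x_{ρ(i)}`. -/
noncomputable def bnAct (n : ℕ) (K : Type*) [CommRing K] (τ : Fin n → K)
    (ρ : Equiv.Perm (Fin n)) :
    MvPolynomial (Fin n) K →ₐ[K] MvPolynomial (Fin n) K :=
  MvPolynomial.aeval fun i => MvPolynomial.C (τ (ρ i)) * MvPolynomial.X (ρ i)

/-- `I` is a `B_n`-invariant ideal. -/
def BnInvariantIdeal (n : ℕ) (K : Type*) [CommRing K]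
    (I : Ideal (MvPolynomial (Fin n) K)) : Prop :=
  ∀ P ∈ I, ∀ τ : Fin n → K, IsSigns τ → ∀ ρ : Equiv.Perm (Fin n), bnAct n K τ ρ P ∈ I

/-- `P` is a `B_n`-invariant polynomial. -/
def BnInvariantPoly (n : ℕ) (K : Type*) [CommRing K] (P : MvPolynomial (Fin n) K) : Prop :=
  ∀ τ : Fin n → K, IsSigns τ → ∀ ρ : Equiv.Perm (Fin n), bnAct n K τ ρ P = P

/-- the decreasing rearrangement of a multiset of naturals, as a 0-indexed part function. -/
def sortedDesc (M : Multiset ℕ) : ℕ → ℕ := fun j => ((M.sort (· ≤ ·)).reverse).getD j 0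

/-- the conjugate (transpose) of the part function `f` (with at most `n` parts). -/
def conjF (n : ℕ) (f : ℕ → ℕ) : ℕ → ℕ :=
  fun c => ((Finset.range n).filter fun i => c < f i).card

/-- indices with positive even exponent in the monomial with exponent vector `e`. -/
def evenSupp {n : ℕ} (e : Fin n →₀ ℕ) : Finset (Fin n) :=
  Finset.univ.filter fun i => e i ≠ 0 ∧ Even (e i)

/-- indices with odd exponent in the monomial with exponent vector `e`. -/
def oddSupp {n : ℕ} (e : Fin n →₀ ℕ) : Finset (Fin n) :=
  Finset.univ.filter fun i => Odd (e i)

/-- `d₁ = Σ_{i∈I₁} k_i` for the monomial with exponent vector `e`. -/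
def d1F {n : ℕ} (e : Fin n →₀ ℕ) : ℕ := ∑ i ∈ evenSupp e, e i / 2

/-- `d₂ = Σ_{i∈I₂} r_i` for the monomial with exponent vector `e`. -/
def d2F {n : ℕ} (e : Fin n →₀ ℕ) : ℕ := ∑ i ∈ oddSupp e, e i / 2

/-- first component of the bipartition `Γ(m)` of the monomial with exponent vector `e`:
`(λ₁+1,…,λ_ℓ+1, 1,…,1)` with `n−(ℓ+s+d₁+d₂)` trailing ones. -/
def gammaFst {n : ℕ} (e : Fin n →₀ ℕ) : ℕ → ℕ := fun j =>
  if j < n - ((oddSupp e).card + d1F e + d2F e) then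
    max (sortedDesc ((evenSupp e).val.map fun i => e i / 2 + 1) j) 1
  else 0

/-- second component of the bipartition `Γ(m)`: `(μ₁+1,…,μ_s+1)`. -/
def gammaSnd {n : ℕ} (e : Fin n →₀ ℕ) : ℕ → ℕ :=
  sortedDesc ((oddSupp e).val.map fun i => e i / 2 + 1)

/-- first component of `Γ*(m)`, the conjugate of the first component of `Γ(m)`. -/
def gammaStarFst {n : ℕ} (e : Fin n →₀ ℕ) : ℕ → ℕ := conjF n (gammaFst e)

/-- second component of `Γ*(m)`, the conjugate of the second component of `Γ(m)`. -/
def gammaStarSnd {n : ℕ} (e : Fin n →₀ ℕ) : ℕ → ℕ := conjF n (gammaSnd e)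

/-- position, in the glued tableau, of column `j` of the left diagram: columns are sorted
by weakly decreasing height, left-diagram columns first among equal heights. -/
def gluePosL (n : ℕ) (f g : ℕ → ℕ) (j : ℕ) : ℕ :=
  j + ((Finset.range n).filter fun k => conjF n f j < conjF n g k).card

/-- position, in the glued tableau, of column `k` of the right diagram. -/
def gluePosR (n : ℕ) (f g : ℕ → ℕ) (k : ℕ) : ℕ :=
  k + ((Finset.range n).filter fun j => conjF n g k ≤ conjF n f j).card

/-- `U` is the glueing `T ⊎ S` of the bitableau `(T,S)`. -/
def IsGlue {n : ℕ} {f g : ℕ → ℕ} (bt : Bitableau n f g)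
    (U : Tableau n (fun i => f i + g i)) : Prop :=
  (∀ c ∈ cellsF n f, U.entry (c.1, gluePosL n f g c.2) = bt.left c) ∧
  (∀ c ∈ cellsF n g, U.entry (c.1, gluePosR n f g c.2) = bt.right c)

/-- extension of a finitely-presented part function to `ℕ → ℕ`. -/
def extendF {n : ℕ} (h : Fin n → Fin (n + 1)) : ℕ → ℕ :=
  fun i => if hi : i < n then (h ⟨i, hi⟩ : ℕ) else 0

/-- `Σ_{(ϑ,ω)∈BP_n, (ϑ,ω) ⋬ (lam,mu)} s_{ϑ,ω}²`, where `s_{ϑ,ω}` is the dimension of the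
span of the Specht polynomials of shape `(ϑ,ω)`. -/
noncomputable def sBound (n : ℕ) (K : Type*) [Field K] (lam mu : ℕ → ℕ) : ℕ :=
  letI : DecidablePred (fun q : (Fin n → Fin (n + 1)) × (Fin n → Fin (n + 1)) =>
      IsBP n (extendF q.1) (extendF q.2) ∧
        ¬ BidomFun (extendF q.1) (extendF q.2) lam mu) :=
    Classical.decPred _
  ∑ q ∈ Finset.univ.filter (fun q : (Fin n → Fin (n + 1)) × (Fin n → Fin (n + 1)) =>
      IsBP n (extendF q.1) (extendF q.2) ∧
        ¬ BidomFun (extendF q.1) (extendF q.2) lam mu),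
    (Module.finrank K (Submodule.span K (spechtSet n K (extendF q.1) (extendF q.2)))) ^ 2

end SpechtBn

namespace SpechtBnAux
open SpechtBn Finset MvPolynomial
open scoped Classical

variable {K : Type*} [Field K] [CharZero K] {n : ℕ}

lemma cast_sq_inj (a b : ℕ) : ((a : K))^2 = ((b:K))^2 ↔ a = b := by
  constructor
  · intro hh
    have h2 : ((a^2 : ℕ) : K) = ((b^2 : ℕ) : K) := by push_cast; exact hh
    exact Nat.pow_left_injective (by norm_num) (Nat.cast_injective h2)
  · rintro rfl; rfl

lemma isBP_le {f g : ℕ → ℕ} (h : IsBP n f g) : (∀ i, f i ≤ n) ∧ (∀ i, g i ≤ n) := by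
  obtain ⟨⟨hfa, hf0⟩, ⟨hga, hg0⟩, hsum⟩ := h
  constructor <;> intro i
  · by_cases hi : i < n
    · calc f i ≤ f i + g i := Nat.le_add_right _ _
        _ ≤ ∑ j ∈ range n, (f j + g j) :=
          Finset.single_le_sum (f := fun j => f j + g j) (fun j _ => Nat.zero_le _) (mem_range.mpr hi)
        _ = n := hsum
    · simp [hf0 i (le_of_not_gt hi)]
  · by_cases hi : i < n
    · calc g i ≤ f i + g i := Nat.le_add_left _ _
        _ ≤ ∑ j ∈ range n, (f j + g j) :=
          Finset.single_le_sum (f := fun j => f j + g j) (fun j _ => Nat.zero_le _) (mem_range.mpr hi)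
        _ = n := hsum
    · simp [hg0 i (le_of_not_gt hi)]

lemma isBP_sum_ge {f g : ℕ → ℕ} (h : IsBP n f g) {k : ℕ} (hk : n ≤ k) :
    ∑ j ∈ range k, (f j + g j) = n := by
  obtain ⟨⟨hfa, hf0⟩, ⟨hga, hg0⟩, hsum⟩ := h
  rw [← hsum]
  apply (Finset.sum_subset (Finset.range_subset_range.mpr hk) ?_).symm
  intro x _ hx
  rw [mem_range, not_lt] at hx
  simp [hf0 x hx, hg0 x hx]

lemma cellsF_filter_card (n K' : ℕ) (f : ℕ → ℕ) (hK : K' ≤ n) (hf : ∀ r, f r ≤ n) :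
    ((cellsF n f).filter fun c => c.1 < K').card = ∑ r ∈ range K', f r := by
  rw [Finset.card_eq_sum_card_fiberwise (f := Prod.fst) (t := range K')
    (fun c hc => mem_range.mpr (mem_filter.mp hc).2)]
  refine Finset.sum_congr rfl fun r hr => ?_
  have hr' := mem_range.mp hr
  have : ((cellsF n f).filter fun c => c.1 < K').filter (fun c => c.1 = r)
      = (Finset.range (f r)).image (fun j => (r, j)) := by
    ext c
    simp only [cellsF, mem_filter, mem_product, mem_range, mem_image]
    constructor
    · rintro ⟨⟨⟨⟨h1, h2⟩, h3⟩, h4⟩, rfl⟩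
      exact ⟨c.2, h3, rfl⟩
    · rintro ⟨j, hj, rfl⟩
      exact ⟨⟨⟨⟨lt_of_lt_of_le hr' hK, lt_of_lt_of_le hj (hf r)⟩, hj⟩, hr'⟩, rfl⟩
  rw [this, Finset.card_image_of_injective _ (fun a b hab => (Prod.mk.injEq _ _ _ _ ▸ hab).2),
    card_range]

lemma cellsF_card (f : ℕ → ℕ) (hf : ∀ r, f r ≤ n) :
    (cellsF n f).card = ∑ r ∈ range n, f r := by
  rw [← cellsF_filter_card n n f le_rfl hf]
  congr 1
  rw [Finset.filter_true_of_mem]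
  intro c hc
  simp only [cellsF, mem_filter, mem_product, mem_range] at hc
  exact hc.1.1

lemma min_le_filter_card (f : ℕ → ℕ) (hf : Antitone f) (K' N j : ℕ) :
    min K' (((range N).filter fun r => j < f r).card)
      ≤ ((range K').filter fun r => j < f r).card := by
  by_cases hh : ∀ r < K', j < f r
  · have : (range K').filter (fun r => j < f r) = range K' :=
      filter_true_of_mem (fun r hr => hh r (mem_range.mp hr))
    rw [this, card_range]; exact min_le_left _ _
  · push_neg at hh
    obtain ⟨r0, hr0, hfr0⟩ := hh
    refine le_trans (min_le_right _ _) (Finset.card_le_card ?_)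
    intro i hi
    simp only [mem_filter, mem_range] at hi ⊢
    refine ⟨?_, hi.2⟩
    by_contra hiK
    push_neg at hiK
    exact absurd hi.2 (not_lt.mpr (le_trans (hf (le_trans hr0.le hiK)) hfr0))

lemma sum_filter_card (N K' : ℕ) (f : ℕ → ℕ) (hf : ∀ r, f r ≤ N) :
    ∑ j ∈ range N, ((range K').filter fun r => j < f r).card = ∑ r ∈ range K', f r := by
  simp only [Finset.card_filter]
  rw [Finset.sum_comm]
  refine Finset.sum_congr rfl fun r _ => ?_
  rw [← Finset.card_filter]
  have : (range N).filter (fun j => j < f r) = range (f r) := by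
    ext j; simp only [mem_filter, mem_range]
    exact ⟨fun hj => hj.2, fun hj => ⟨lt_of_lt_of_le hj (hf r), hj⟩⟩
  rw [this, card_range]

/-! ### cellOf machinery -/

/-- the cell of a bitableau containing a given index. -/
noncomputable def cellOf {f g : ℕ → ℕ} (bt : Bitableau n f g) (i : Fin n) :
    (ℕ × ℕ) ⊕ (ℕ × ℕ) :=
  (bt.bij i).exists.choose

lemma cellOf_spec {f g : ℕ → ℕ} (bt : Bitableau n f g) (i : Fin n) :
    Sum.elim (fun c => c ∈ cellsF n f ∧ bt.left c = i)
      (fun c => c ∈ cellsF n g ∧ bt.right c = i) (cellOf bt i) :=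
  (bt.bij i).exists.choose_spec

lemma cellOf_eq {f g : ℕ → ℕ} (bt : Bitableau n f g) (i : Fin n)
    (c : (ℕ × ℕ) ⊕ (ℕ × ℕ))
    (hc : Sum.elim (fun c => c ∈ cellsF n f ∧ bt.left c = i)
      (fun c => c ∈ cellsF n g ∧ bt.right c = i) c) : cellOf bt i = c :=
  (bt.bij i).unique (cellOf_spec bt i) hc

end SpechtBnAux
namespace SpechtBnAux
open SpechtBn Finset MvPolynomial
open scoped Classical

variable {K : Type*} [Field K] [CharZero K] {n : ℕ}

lemma counting {f g : ℕ → ℕ} (hfa : Antitone f) (hga : Antitone g)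
    (hfn : ∀ r, f r ≤ n) (hgn : ∀ r, g r ≤ n)
    (bt : Bitableau n f g) (z : Fin n → K)
    (hz : eval z (speB n K bt) ≠ 0) (V : Finset K) (h0 : (0:K) ∉ V) (wz : Bool) :
    (univ.filter fun i => z i ^ 2 ∈ V ∨ (wz = true ∧ z i = 0)).card
      ≤ (∑ r ∈ range (V.card + if wz then 1 else 0), f r) + ∑ r ∈ range V.card, g r := by
  set k := V.card with hk
  set KL := k + (if wz then 1 else 0) with hKL
  set A := univ.filter fun i => z i ^ 2 ∈ V ∨ (wz = true ∧ z i = 0) with hA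
  -- factor nonvanishing
  rw [speB] at hz
  simp only [map_mul, map_prod, map_sub, map_pow, eval_X] at hz
  have h12 := mul_ne_zero_iff.mp hz
  have h1 := mul_ne_zero_iff.mp h12.1
  have hTp := Finset.prod_ne_zero_iff.mp h1.1
  have hSp := Finset.prod_ne_zero_iff.mp h1.2
  have hS0 := Finset.prod_ne_zero_iff.mp h12.2
  have hT : ∀ c1 c2 : ℕ × ℕ, c1 ∈ cellsF n f → c2 ∈ cellsF n f → c1.2 = c2.2 →
      z (bt.left c1) ^ 2 = z (bt.left c2) ^ 2 → c1 = c2 := by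
    intro c1 c2 m1 m2 hcol heq
    rcases lt_trichotomy c1.1 c2.1 with hlt | hEq | hgt
    · exact absurd (sub_eq_zero_of_eq heq)
        (hTp (c1, c2) (by
          simp only [colPairs, mem_filter, mem_product]
          exact ⟨⟨m1, m2⟩, hcol, hlt⟩))
    · exact Prod.ext hEq hcol
    · exact absurd (sub_eq_zero_of_eq heq.symm)
        (hTp (c2, c1) (by
          simp only [colPairs, mem_filter, mem_product]
          exact ⟨⟨m2, m1⟩, hcol.symm, hgt⟩))
  have hS : ∀ c1 c2 : ℕ × ℕ, c1 ∈ cellsF n g → c2 ∈ cellsF n g → c1.2 = c2.2 →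
      z (bt.right c1) ^ 2 = z (bt.right c2) ^ 2 → c1 = c2 := by
    intro c1 c2 m1 m2 hcol heq
    rcases lt_trichotomy c1.1 c2.1 with hlt | hEq | hgt
    · exact absurd (sub_eq_zero_of_eq heq)
        (hSp (c1, c2) (by
          simp only [colPairs, mem_filter, mem_product]
          exact ⟨⟨m1, m2⟩, hcol, hlt⟩))
    · exact Prod.ext hEq hcol
    · exact absurd (sub_eq_zero_of_eq heq.symm)
        (hSp (c2, c1) (by
          simp only [colPairs, mem_filter, mem_product]
          exact ⟨⟨m2, m1⟩, hcol.symm, hgt⟩))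
  -- the key (fiber) map
  set key : Fin n → Bool × ℕ :=
    fun i => ((cellOf bt i).isLeft, Sum.elim Prod.snd Prod.snd (cellOf bt i)) with hkey
  have hkey_comp : ∀ {i : Fin n} {b : Bool} {j : ℕ}, key i = (b, j) →
      (cellOf bt i).isLeft = b ∧ Sum.elim Prod.snd Prod.snd (cellOf bt i) = j := by
    intro i b j hij
    rw [hkey] at hij
    exact ⟨congrArg Prod.fst hij, congrArg Prod.snd hij⟩
  have hcol_lt : ∀ i : Fin n, Sum.elim Prod.snd Prod.snd (cellOf bt i) ∈ range n := by
    intro i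
    have hs := cellOf_spec bt i
    rcases hcc : cellOf bt i with c | c <;> rw [hcc] at hs <;>
      simp only [Sum.elim_inl, Sum.elim_inr] at hs ⊢ <;>
    · obtain ⟨hm, -⟩ := hs
      simp only [cellsF, mem_filter, mem_product, mem_range] at hm
      exact mem_range.mpr hm.1.2
  have hfib := Finset.card_eq_sum_card_fiberwise
    (s := A) (t := (univ : Finset Bool) ×ˢ range n) (f := key)
    (fun i _ => mem_product.mpr ⟨mem_univ _, hcol_lt i⟩)
  -- bound on left fibers
  have hboundL : ∀ j, (A.filter fun i => key i = (true, j)).card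
      ≤ ((range KL).filter fun r => j < f r).card := by
    intro j
    refine le_trans (le_min ?_ ?_) (min_le_filter_card f hfa KL n j)
    · -- ≤ KL via value map
      have hinj : ∀ i ∈ A.filter fun i => key i = (true, j),
          ∀ i' ∈ A.filter fun i => key i = (true, j), z i ^ 2 = z i' ^ 2 → i = i' := by
        intro i hi i' hi' hzz
        obtain ⟨hL, hcolj⟩ := hkey_comp (mem_filter.mp hi).2
        obtain ⟨hL', hcolj'⟩ := hkey_comp (mem_filter.mp hi').2
        have hs := cellOf_spec bt i
        have hs' := cellOf_spec bt i'
        rcases hcc : cellOf bt i with c | c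
        · rcases hcc' : cellOf bt i' with c' | c'
          · rw [hcc] at hs hcolj; rw [hcc'] at hs' hcolj'
            simp only [Sum.elim_inl] at hs hs' hcolj hcolj'
            have hceq : c = c' := by
              apply hT c c' hs.1 hs'.1 (hcolj.trans hcolj'.symm)
              rw [hs.2, hs'.2]; exact hzz
            rw [← hs.2, ← hs'.2, hceq]
          · rw [hcc'] at hL'; simp at hL'
        · rw [hcc] at hL; simp at hL
      rcases Bool.eq_false_or_eq_true wz with hw | hw
      · have hmaps : ∀ i ∈ A.filter fun i => key i = (true, j),
            z i ^ 2 ∈ insert (0:K) V := by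
          intro i hi
          rcases mem_filter.mp (mem_filter.mp hi).1 with ⟨-, hPV | ⟨-, hP0⟩⟩
          · exact mem_insert_of_mem hPV
          · rw [hP0]; simp
        calc (A.filter fun i => key i = (true, j)).card ≤ (insert (0:K) V).card :=
              Finset.card_le_card_of_injOn _ hmaps hinj
          _ = k + 1 := card_insert_of_notMem h0
          _ ≤ KL := by rw [hKL, hw]; simp
      · have hmaps : ∀ i ∈ A.filter fun i => key i = (true, j), z i ^ 2 ∈ V := by
          intro i hi
          rcases mem_filter.mp (mem_filter.mp hi).1 with ⟨-, hPV | ⟨hwz, -⟩⟩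
          · exact hPV
          · rw [hw] at hwz; exact absurd hwz (by simp)
        calc (A.filter fun i => key i = (true, j)).card ≤ V.card :=
              Finset.card_le_card_of_injOn _ hmaps hinj
          _ ≤ KL := by rw [hKL, hw]; simp [hk]
    · -- ≤ conj via row map
      refine Finset.card_le_card_of_injOn (fun i => Sum.elim Prod.fst Prod.fst (cellOf bt i))
        ?_ ?_
      · intro i hi
        show Sum.elim Prod.fst Prod.fst (cellOf bt i) ∈ (range n).filter fun r => j < f r
        obtain ⟨hL, hcolj⟩ := hkey_comp (mem_filter.mp hi).2
        have hs := cellOf_spec bt i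
        rcases hcc : cellOf bt i with c | c
        · rw [hcc] at hs hcolj
          simp only [Sum.elim_inl] at hs hcolj ⊢
          obtain ⟨hm, -⟩ := hs
          simp only [cellsF, mem_filter, mem_product, mem_range] at hm
          rw [mem_filter, mem_range]
          exact ⟨hm.1.1, by rw [← hcolj]; exact hm.2⟩
        · rw [hcc] at hL; simp at hL
      · intro i hi i' hi' hrow0
        have hrow : Sum.elim Prod.fst Prod.fst (cellOf bt i)
            = Sum.elim Prod.fst Prod.fst (cellOf bt i') := hrow0
        clear hrow0
        obtain ⟨hL, hcolj⟩ := hkey_comp (mem_filter.mp hi).2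
        obtain ⟨hL', hcolj'⟩ := hkey_comp (mem_filter.mp hi').2
        have hs := cellOf_spec bt i
        have hs' := cellOf_spec bt i'
        rcases hcc : cellOf bt i with c | c
        · rcases hcc' : cellOf bt i' with c' | c'
          · rw [hcc] at hs hcolj; rw [hcc'] at hs' hcolj'
            rw [hcc, hcc'] at hrow
            simp only [Sum.elim_inl] at hs hs' hcolj hcolj' hrow
            have hceq : c = c' := Prod.ext hrow (hcolj.trans hcolj'.symm)
            rw [← hs.2, ← hs'.2, hceq]
          · rw [hcc'] at hL'; simp at hL'
        · rw [hcc] at hL; simp at hL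
  -- bound on right fibers
  have hboundR : ∀ j, (A.filter fun i => key i = (false, j)).card
      ≤ ((range k).filter fun r => j < g r).card := by
    intro j
    refine le_trans (le_min ?_ ?_) (min_le_filter_card g hga k n j)
    · have hinj : ∀ i ∈ A.filter fun i => key i = (false, j),
          ∀ i' ∈ A.filter fun i => key i = (false, j), z i ^ 2 = z i' ^ 2 → i = i' := by
        intro i hi i' hi' hzz
        obtain ⟨hL, hcolj⟩ := hkey_comp (mem_filter.mp hi).2
        obtain ⟨hL', hcolj'⟩ := hkey_comp (mem_filter.mp hi').2
        have hs := cellOf_spec bt i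
        have hs' := cellOf_spec bt i'
        rcases hcc : cellOf bt i with c | c
        · rw [hcc] at hL; simp at hL
        · rcases hcc' : cellOf bt i' with c' | c'
          · rw [hcc'] at hL'; simp at hL'
          · rw [hcc] at hs hcolj; rw [hcc'] at hs' hcolj'
            simp only [Sum.elim_inr] at hs hs' hcolj hcolj'
            have hceq : c = c' := by
              apply hS c c' hs.1 hs'.1 (hcolj.trans hcolj'.symm)
              rw [hs.2, hs'.2]; exact hzz
            rw [← hs.2, ← hs'.2, hceq]
      have hmaps : ∀ i ∈ A.filter fun i => key i = (false, j), z i ^ 2 ∈ V := by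
        intro i hi
        obtain ⟨hL, hcolj⟩ := hkey_comp (mem_filter.mp hi).2
        have hs := cellOf_spec bt i
        rcases mem_filter.mp (mem_filter.mp hi).1 with ⟨-, hPV | ⟨-, hP0⟩⟩
        · exact hPV
        · exfalso
          rcases hcc : cellOf bt i with c | c
          · rw [hcc] at hL; simp at hL
          · rw [hcc] at hs
            simp only [Sum.elim_inr] at hs
            exact hS0 c hs.1 (by rw [hs.2]; exact hP0)
      exact Finset.card_le_card_of_injOn _ hmaps hinj
    · refine Finset.card_le_card_of_injOn (fun i => Sum.elim Prod.fst Prod.fst (cellOf bt i))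
        ?_ ?_
      · intro i hi
        show Sum.elim Prod.fst Prod.fst (cellOf bt i) ∈ (range n).filter fun r => j < g r
        obtain ⟨hL, hcolj⟩ := hkey_comp (mem_filter.mp hi).2
        have hs := cellOf_spec bt i
        rcases hcc : cellOf bt i with c | c
        · rw [hcc] at hL; simp at hL
        · rw [hcc] at hs hcolj
          simp only [Sum.elim_inr] at hs hcolj ⊢
          obtain ⟨hm, -⟩ := hs
          simp only [cellsF, mem_filter, mem_product, mem_range] at hm
          rw [mem_filter, mem_range]
          exact ⟨hm.1.1, by rw [← hcolj]; exact hm.2⟩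
      · intro i hi i' hi' hrow0
        have hrow : Sum.elim Prod.fst Prod.fst (cellOf bt i)
            = Sum.elim Prod.fst Prod.fst (cellOf bt i') := hrow0
        clear hrow0
        obtain ⟨hL, hcolj⟩ := hkey_comp (mem_filter.mp hi).2
        obtain ⟨hL', hcolj'⟩ := hkey_comp (mem_filter.mp hi').2
        have hs := cellOf_spec bt i
        have hs' := cellOf_spec bt i'
        rcases hcc : cellOf bt i with c | c
        · rw [hcc] at hL; simp at hL
        · rcases hcc' : cellOf bt i' with c' | c'
          · rw [hcc'] at hL'; simp at hL'
          · rw [hcc] at hs hcolj; rw [hcc'] at hs' hcolj'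
            rw [hcc, hcc'] at hrow
            simp only [Sum.elim_inr] at hs hs' hcolj hcolj' hrow
            have hceq : c = c' := Prod.ext hrow (hcolj.trans hcolj'.symm)
            rw [← hs.2, ← hs'.2, hceq]
  -- assemble
  rw [hfib, Finset.sum_product, Fintype.sum_bool]
  have hLsum := Finset.sum_le_sum (fun j (_ : j ∈ range n) => hboundL j)
  have hRsum := Finset.sum_le_sum (fun j (_ : j ∈ range n) => hboundR j)
  have e1 := sum_filter_card n KL f hfn
  have e2 := sum_filter_card n k g hgn
  omega

end SpechtBnAux
namespace SpechtBnAux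
open SpechtBn Finset MvPolynomial
open scoped Classical

variable {K : Type*} [Field K] [CharZero K] {n : ℕ}

/-- the prescribed value of each cell. -/
def wcell (k t : ℕ) : (ℕ × ℕ) ⊕ (ℕ × ℕ) → ℕ
  | Sum.inl c => if c.1 < k then c.1 + 1 else
      if c.1 < k + t then 0 else k + 1 + 2 * Nat.pair c.1 c.2
  | Sum.inr c => if c.1 < k then c.1 + 1 else k + 2 + 2 * Nat.pair c.1 c.2

lemma wcell_left_ne {k t r1 r2 j1 j2 : ℕ} (ht : t ≤ 1) (hj : j1 = j2) (h : r1 ≠ r2) :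
    wcell k t (Sum.inl (r1, j1)) ≠ wcell k t (Sum.inl (r2, j2)) := by
  subst hj
  simp only [wcell]
  split_ifs <;> try omega
  all_goals
    intro he
    have hp : Nat.pair r1 j1 = Nat.pair r2 j1 := by omega
    have := (Nat.pair_eq_pair.mp hp).1
    omega

lemma wcell_right_ne {k t r1 r2 j1 j2 : ℕ} (hj : j1 = j2) (h : r1 ≠ r2) :
    wcell k t (Sum.inr (r1, j1)) ≠ wcell k t (Sum.inr (r2, j2)) := by
  subst hj
  simp only [wcell]
  split_ifs <;> try omega
  all_goals
    intro he
    have hp : Nat.pair r1 j1 = Nat.pair r2 j1 := by omega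
    have := (Nat.pair_eq_pair.mp hp).1
    omega

lemma wcell_right_pos (k t : ℕ) (c : ℕ × ℕ) : 0 < wcell k t (Sum.inr c) := by
  simp only [wcell]
  split_ifs <;> omega

lemma wcell_left_zero_iff (k t : ℕ) (c : ℕ × ℕ) :
    wcell k t (Sum.inl c) = 0 ↔ (k ≤ c.1 ∧ c.1 < k + t) := by
  simp only [wcell]
  split_ifs <;> constructor <;> intro hh <;> first | omega | exact hh.elim

lemma wcell_small_iff (k t : ℕ) (c : (ℕ × ℕ) ⊕ (ℕ × ℕ)) :
    (∃ r, r < k ∧ wcell k t c = r + 1) ↔ Sum.elim Prod.fst Prod.fst c < k := by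
  rcases c with c | c <;> simp only [wcell, Sum.elim_inl, Sum.elim_inr] <;> constructor
  · rintro ⟨r, hr, he⟩
    split_ifs at he <;> omega
  · intro hc
    exact ⟨c.1, hc, by rw [if_pos hc]⟩
  · rintro ⟨r, hr, he⟩
    split_ifs at he <;> omega
  · intro hc
    exact ⟨c.1, hc, by rw [if_pos hc]⟩

/-- a bitableau from an enumeration of the cells. -/
noncomputable def mkBt (n : ℕ) (f g : ℕ → ℕ) (hn : 0 < n)
    (e : {c // c ∈ (cellsF n f).disjSum (cellsF n g)} ≃ Fin n) : Bitableau n f g where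
  left c := if h : c ∈ cellsF n f then e ⟨Sum.inl c, Finset.inl_mem_disjSum.mpr h⟩ else ⟨0, hn⟩
  right c := if h : c ∈ cellsF n g then e ⟨Sum.inr c, Finset.inr_mem_disjSum.mpr h⟩ else ⟨0, hn⟩
  bij i := by
    refine ⟨(e.symm i).val, ?_, ?_⟩
    · have hmem := (e.symm i).property
      rcases hcc : (e.symm i).val with c | c <;> rw [hcc] at hmem
      · rw [Finset.inl_mem_disjSum] at hmem
        simp only [Sum.elim_inl]
        refine ⟨hmem, ?_⟩
        rw [dif_pos hmem,
          show (⟨Sum.inl c, Finset.inl_mem_disjSum.mpr hmem⟩ :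
            {x // x ∈ (cellsF n f).disjSum (cellsF n g)}) = e.symm i from Subtype.ext hcc.symm,
          Equiv.apply_symm_apply]
      · rw [Finset.inr_mem_disjSum] at hmem
        simp only [Sum.elim_inr]
        refine ⟨hmem, ?_⟩
        rw [dif_pos hmem,
          show (⟨Sum.inr c, Finset.inr_mem_disjSum.mpr hmem⟩ :
            {x // x ∈ (cellsF n f).disjSum (cellsF n g)}) = e.symm i from Subtype.ext hcc.symm,
          Equiv.apply_symm_apply]
    · rintro (d | d) hd
      · simp only [Sum.elim_inl] at hd
        obtain ⟨hdm, hdl⟩ := hd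
        rw [dif_pos hdm] at hdl
        have heq : (⟨Sum.inl d, Finset.inl_mem_disjSum.mpr hdm⟩ :
            {x // x ∈ (cellsF n f).disjSum (cellsF n g)}) = e.symm i := by
          rw [← hdl, Equiv.symm_apply_apply]
        exact congrArg Subtype.val heq
      · simp only [Sum.elim_inr] at hd
        obtain ⟨hdm, hdl⟩ := hd
        rw [dif_pos hdm] at hdl
        have heq : (⟨Sum.inr d, Finset.inr_mem_disjSum.mpr hdm⟩ :
            {x // x ∈ (cellsF n f).disjSum (cellsF n g)}) = e.symm i := by
          rw [← hdl, Equiv.symm_apply_apply]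
        exact congrArg Subtype.val heq

lemma filter_disjSum' {α β : Type*} (s : Finset α) (t : Finset β) (Q : α ⊕ β → Prop)
    [DecidablePred Q] :
    (s.disjSum t).filter Q
      = (s.filter fun a => Q (Sum.inl a)).disjSum (t.filter fun b => Q (Sum.inr b)) := by
  ext c
  rcases c with a | b <;> simp

lemma mem_variety_of_forall {f g : ℕ → ℕ} (z : Fin n → K)
    (hev : ∀ bt : Bitableau n f g, eval z (speB n K bt) = 0) :
    z ∈ spechtVariety n K f g := by
  intro P hP
  have hle : spechtIdeal n K f g ≤ RingHom.ker (eval z) := by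
    rw [spechtIdeal, Ideal.span_le]
    rintro Q hQ
    obtain ⟨bt, rfl⟩ := hQ
    exact RingHom.mem_ker.mpr (hev bt)
  exact RingHom.mem_ker.mp (hle hP)

lemma key_construction (k t : ℕ) (f g : ℕ → ℕ) (ht : t ≤ 1) (hkt : k + t ≤ n)
    (hb : IsBP n f g) (hn : 0 < n) (wz : Bool) (hwt : wz = true ↔ t = 1) :
    ∃ (z : Fin n → K) (bt : Bitableau n f g),
      eval z (speB n K bt) ≠ 0 ∧
      (univ.filter fun i => z i ^ 2 ∈ ((range k).image fun r => ((r + 1 : ℕ) : K) ^ 2)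
          ∨ (wz = true ∧ z i = 0)).card
        = (∑ r ∈ range (k + t), f r) + ∑ r ∈ range k, g r := by
  obtain ⟨hfn, hgn⟩ := isBP_le hb
  have hcard : Fintype.card {c // c ∈ (cellsF n f).disjSum (cellsF n g)} = n := by
    rw [Fintype.card_coe, Finset.card_disjSum, cellsF_card f hfn, cellsF_card g hgn,
      ← Finset.sum_add_distrib, hb.2.2]
  have e : {c // c ∈ (cellsF n f).disjSum (cellsF n g)} ≃ Fin n :=
    Fintype.equivFinOfCardEq hcard
  set bt := mkBt n f g hn e with hbt
  set z : Fin n → K := fun i => ((wcell k t ((e.symm i).val) : ℕ) : K) with hz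
  have hzL : ∀ c ∈ cellsF n f, z (bt.left c) = ((wcell k t (Sum.inl c) : ℕ) : K) := by
    intro c hc
    have : bt.left c = e ⟨Sum.inl c, Finset.inl_mem_disjSum.mpr hc⟩ := dif_pos hc
    rw [hz, this]
    simp [Equiv.symm_apply_apply]
  have hzR : ∀ c ∈ cellsF n g, z (bt.right c) = ((wcell k t (Sum.inr c) : ℕ) : K) := by
    intro c hc
    have : bt.right c = e ⟨Sum.inr c, Finset.inr_mem_disjSum.mpr hc⟩ := dif_pos hc
    rw [hz, this]
    simp [Equiv.symm_apply_apply]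
  refine ⟨z, bt, ?_, ?_⟩
  · -- nonvanishing
    rw [speB]
    simp only [map_mul, map_prod, map_sub, map_pow, eval_X]
    refine mul_ne_zero (mul_ne_zero ?_ ?_) ?_
    · rw [Finset.prod_ne_zero_iff]
      intro qq hq
      simp only [colPairs, mem_filter, mem_product] at hq
      obtain ⟨⟨m1, m2⟩, hcol, hlt⟩ := hq
      rw [hzL qq.1 m1, hzL qq.2 m2, sub_ne_zero, Ne, cast_sq_inj]
      exact wcell_left_ne ht hcol (Nat.ne_of_lt hlt)
    · rw [Finset.prod_ne_zero_iff]
      intro qq hq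
      simp only [colPairs, mem_filter, mem_product] at hq
      obtain ⟨⟨m1, m2⟩, hcol, hlt⟩ := hq
      rw [hzR qq.1 m1, hzR qq.2 m2, sub_ne_zero, Ne, cast_sq_inj]
      exact wcell_right_ne hcol (Nat.ne_of_lt hlt)
    · rw [Finset.prod_ne_zero_iff]
      intro c hc
      rw [hzR c hc]
      exact Nat.cast_ne_zero.mpr (wcell_right_pos k t c).ne'
  · -- cardinality
    have hpred : ∀ i : Fin n,
        ((z i ^ 2 ∈ ((range k).image fun r => ((r + 1 : ℕ) : K) ^ 2) ∨ (wz = true ∧ z i = 0))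
          ↔ Sum.elim (fun d : ℕ × ℕ => d.1 < k + t) (fun d : ℕ × ℕ => d.1 < k)
              ((e.symm i).val)) := by
      intro i
      have hz2 : z i ^ 2 ∈ ((range k).image fun r => ((r + 1 : ℕ) : K) ^ 2)
          ↔ ∃ r, r < k ∧ wcell k t ((e.symm i).val) = r + 1 := by
        rw [hz]
        simp only [mem_image, mem_range]
        constructor
        · rintro ⟨r, hr, hre⟩
          exact ⟨r, hr, ((cast_sq_inj (K := K) _ _).mp hre.symm)⟩
        · rintro ⟨r, hr, hre⟩
          exact ⟨r, hr, by rw [hre]⟩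
      have hz0 : z i = 0 ↔ wcell k t ((e.symm i).val) = 0 := by
        rw [hz]; exact Nat.cast_eq_zero
      rw [hz2, hz0, wcell_small_iff]
      generalize (e.symm i).val = c
      rcases c with c | c
      · simp only [Sum.elim_inl, wcell_left_zero_iff]
        constructor
        · rintro (hlt | ⟨-, hle, hlt⟩) <;> omega
        · intro hlt
          by_cases hck : c.1 < k
          · exact Or.inl hck
          · exact Or.inr ⟨hwt.mpr (by omega), by omega⟩
      · simp only [Sum.elim_inr]
        constructor
        · rintro (hlt | ⟨-, h0⟩)
          · exact hlt
          · exact absurd h0 (by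
              have := wcell_right_pos k t c
              omega)
        · exact Or.inl
    have hbij : (univ.filter fun i =>
        z i ^ 2 ∈ ((range k).image fun r => ((r + 1 : ℕ) : K) ^ 2) ∨ (wz = true ∧ z i = 0)).card
        = (((cellsF n f).disjSum (cellsF n g)).filter
            (fun c => Sum.elim (fun d : ℕ × ℕ => d.1 < k + t) (fun d : ℕ × ℕ => d.1 < k) c)).card := by
      refine Finset.card_bij' (fun i _ => (e.symm i).val)
        (fun c hc => e ⟨c, (mem_filter.mp hc).1⟩) ?_ ?_ ?_ ?_
      · intro i hi
        rw [mem_filter]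
        exact ⟨(e.symm i).property, (hpred i).mp (mem_filter.mp hi).2⟩
      · intro c hc
        rw [mem_filter]
        refine ⟨mem_univ _, ?_⟩
        apply (hpred _).mpr
        rw [Equiv.symm_apply_apply]
        exact (mem_filter.mp hc).2
      · intro i hi
        exact (congrArg e (Subtype.ext rfl)).trans (e.apply_symm_apply i)
      · intro c hc
        exact congrArg Subtype.val (e.symm_apply_apply _)
    rw [hbij, filter_disjSum', Finset.card_disjSum]
    have h1 : ((cellsF n f).filter fun a => (Sum.inl a : (ℕ×ℕ) ⊕ (ℕ×ℕ)).elim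
        (fun d => d.1 < k + t) (fun d => d.1 < k)).card = ∑ r ∈ range (k + t), f r := by
      have : ((cellsF n f).filter fun a => (Sum.inl a : (ℕ×ℕ) ⊕ (ℕ×ℕ)).elim
          (fun d => d.1 < k + t) (fun d => d.1 < k))
          = (cellsF n f).filter fun c => c.1 < k + t := by
        apply Finset.filter_congr
        intro c _
        simp
      rw [this, cellsF_filter_card n (k + t) f hkt hfn]
    have h2 : ((cellsF n g).filter fun a => (Sum.inr a : (ℕ×ℕ) ⊕ (ℕ×ℕ)).elim
        (fun d => d.1 < k + t) (fun d => d.1 < k)).card = ∑ r ∈ range k, g r := by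
      have : ((cellsF n g).filter fun a => (Sum.inr a : (ℕ×ℕ) ⊕ (ℕ×ℕ)).elim
          (fun d => d.1 < k + t) (fun d => d.1 < k))
          = (cellsF n g).filter fun c => c.1 < k := by
        apply Finset.filter_congr
        intro c _
        simp
      rw [this, cellsF_filter_card n k g (by omega) hgn]
    rw [h1, h2]

end SpechtBnAux

open SpechtBnAux Finset

open SpechtBn in
/-- Proposition 3: inclusion of `B_n`-Specht varieties implies bidominance. -/
theorem bidom_of_spechtVariety_subset {K : Type*} [Field K] [CharZero K] {n : ℕ}
    (p q : Bipartition n)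
    (h : spechtVariety n K p.l p.m ⊆ spechtVariety n K q.l q.m) :
    Bidom q p := by
  classical
  by_contra hB
  have hB' : ¬ ((∀ k, ∑ j ∈ Finset.range k, (q.l j + q.m j)
        ≤ ∑ j ∈ Finset.range k, (p.l j + p.m j)) ∧
      (∀ k, (∑ j ∈ Finset.range k, (q.l j + q.m j)) + q.l k
        ≤ (∑ j ∈ Finset.range k, (p.l j + p.m j)) + p.l k)) := hB
  obtain ⟨k, t, wz, ht, hwt, hkt, hkey⟩ :
      ∃ (k t : ℕ) (wz : Bool), t ≤ 1 ∧ (wz = true ↔ t = 1) ∧ k + t ≤ n ∧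
        (∑ r ∈ Finset.range (k + t), p.l r) + (∑ r ∈ Finset.range k, p.m r)
          < (∑ r ∈ Finset.range (k + t), q.l r) + (∑ r ∈ Finset.range k, q.m r) := by
    rcases not_and_or.mp hB' with h1 | h2
    · push_neg at h1
      obtain ⟨k, hk⟩ := h1
      have hkn : k ≤ n := by
        by_contra hkn
        push_neg at hkn
        rw [isBP_sum_ge q.isBP hkn.le, isBP_sum_ge p.isBP hkn.le] at hk
        exact lt_irrefl _ hk
      refine ⟨k, 0, false, by omega, by simp, by omega, ?_⟩
      rw [Finset.sum_add_distrib, Finset.sum_add_distrib] at hk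
      simpa using hk
    · push_neg at h2
      obtain ⟨k, hk⟩ := h2
      have hkn : k < n := by
        by_contra hkn
        push_neg at hkn
        rw [isBP_sum_ge q.isBP hkn, isBP_sum_ge p.isBP hkn,
          q.isBP.1.2 k hkn, p.isBP.1.2 k hkn] at hk
        exact lt_irrefl _ hk
      refine ⟨k, 1, true, le_rfl, by simp, by omega, ?_⟩
      rw [Finset.sum_add_distrib, Finset.sum_add_distrib] at hk
      rw [Finset.sum_range_succ, Finset.sum_range_succ]
      omega
  have hn : 0 < n := by
    rcases Nat.eq_zero_or_pos n with h0 | h0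
    · exfalso
      subst h0
      obtain ⟨rfl, rfl⟩ : k = 0 ∧ t = 0 := by omega
      simp at hkey
    · exact h0
  obtain ⟨z, btq, hnv, hcard⟩ :=
    key_construction (K := K) k t q.l q.m ht hkt q.isBP hn wz hwt
  have hzq : z ∉ spechtVariety n K q.l q.m := by
    intro hmem
    exact hnv (hmem _ (Ideal.subset_span ⟨btq, rfl⟩))
  have hzp : z ∉ spechtVariety n K p.l p.m := fun hm => hzq (h hm)
  have hnall : ¬ ∀ bt : Bitableau n p.l p.m, MvPolynomial.eval z (speB n K bt) = 0 :=
    fun hall => hzp (mem_variety_of_forall z hall)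
  obtain ⟨btp, hbtp⟩ := not_forall.mp hnall
  have hVcard : ((Finset.range k).image fun r => ((r + 1 : ℕ) : K) ^ 2).card = k := by
    rw [Finset.card_image_of_injOn, Finset.card_range]
    intro a _ b _ hab
    have := (cast_sq_inj (K := K) (a + 1) (b + 1)).mp hab
    omega
  have h0V : (0 : K) ∉ (Finset.range k).image fun r => ((r + 1 : ℕ) : K) ^ 2 := by
    simp only [Finset.mem_image, Finset.mem_range]
    rintro ⟨r, -, hre⟩
    have h3 : ((r + 1 : ℕ) : K) = 0 := (pow_eq_zero_iff (by norm_num)).mp hre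
    have h4 := Nat.cast_eq_zero.mp h3
    omega
  have hcount := counting (n := n) (f := p.l) (g := p.m) p.isBP.1.1 p.isBP.2.1.1
    (isBP_le p.isBP).1 (isBP_le p.isBP).2 btp z hbtp
    ((Finset.range k).image fun r => ((r + 1 : ℕ) : K) ^ 2) h0V wz
  rw [hVcard] at hcount
  have hrange : (k + if wz = true then 1 else 0) = k + t := by
    rcases Bool.eq_false_or_eq_true wz with hw | hw
    · rw [hw, if_pos rfl, hwt.mp hw]
    · have ht1 : t ≠ 1 := fun h1 => by simp [hwt.mpr h1] at hw
      rw [hw]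
      simp only [Bool.false_eq_true, if_false]
      omega
  rw [hrange, hcard] at hcount
  omega
end

section
/- Let (λ,μ) be a bipartition of n and let W_{(λ,μ)} ⊆ K[x₁,…,x_n] be the K-linear span of all B_n-Specht polynomials of shape (λ,μ) (a B_n-stable subspace, all of whose Specht polynomial generators have the same degree d₀). Then: (a) for every B_n-stable K-subspace M of K[x₁,…,x_n] and every K[B_n]-module isomorphism φ: W_{(λ,μ)} → M, the polynomial φ(spe_{(T,S)}) is divisible by spe_{(T,S)} for every bitableau (T,S) of shape (λ,μ); consequently every B_n-stable K-subspace of K[x₁,…,x_n] isomorphic to W_{(λ,μ)} as a K[B_n]-module is contained in the Specht ideal I_{(λ,μ)}; (b) if moreover every element of such a subspace M has degree at most d₀, then M = W_{(λ,μ)}. -/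
set_option linter.unusedSectionVars false

namespace SpechtAux

open SpechtBn MvPolynomial

variable {K : Type*} [Field K] [CharZero K] {n : ℕ}

lemma mem_cellsF {f : ℕ → ℕ} {c : ℕ × ℕ} :
    c ∈ cellsF n f ↔ (c.1 < n ∧ c.2 < n) ∧ c.2 < f c.1 := by
  unfold cellsF
  rw [Finset.mem_filter, Finset.mem_product, Finset.mem_range, Finset.mem_range]

lemma mem_colPairs {f : ℕ → ℕ} {q : (ℕ × ℕ) × (ℕ × ℕ)} :
    q ∈ colPairs n f ↔ (q.1 ∈ cellsF n f ∧ q.2 ∈ cellsF n f) ∧ q.1.2 = q.2.2 ∧ q.1.1 < q.2.1 := by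
  unfold colPairs
  rw [Finset.mem_filter, Finset.mem_product]

section Bt

variable {f g : ℕ → ℕ} (bt : Bitableau n f g)

lemma left_injOn {c c' : ℕ × ℕ} (hc : c ∈ cellsF n f) (hc' : c' ∈ cellsF n f)
    (h : bt.left c = bt.left c') : c = c' := by
  obtain ⟨w, -, hun⟩ := bt.bij (bt.left c)
  have h1 := hun (Sum.inl c) ⟨hc, rfl⟩
  have h2 := hun (Sum.inl c') ⟨hc', h.symm⟩
  exact Sum.inl.inj (h1.trans h2.symm)

lemma right_injOn {c c' : ℕ × ℕ} (hc : c ∈ cellsF n g) (hc' : c' ∈ cellsF n g)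
    (h : bt.right c = bt.right c') : c = c' := by
  obtain ⟨w, -, hun⟩ := bt.bij (bt.right c)
  have h1 := hun (Sum.inr c) ⟨hc, rfl⟩
  have h2 := hun (Sum.inr c') ⟨hc', h.symm⟩
  exact Sum.inr.inj (h1.trans h2.symm)

lemma left_ne_right {c c' : ℕ × ℕ} (hc : c ∈ cellsF n f) (hc' : c' ∈ cellsF n g) :
    bt.left c ≠ bt.right c' := by
  intro h
  obtain ⟨w, -, hun⟩ := bt.bij (bt.left c)
  have h1 := hun (Sum.inl c) ⟨hc, rfl⟩
  have h2 := hun (Sum.inr c') ⟨hc', h.symm⟩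
  exact absurd (h1.trans h2.symm) (by simp)

end Bt

/-! ### Substitution of a single variable -/

noncomputable def sub1 (a : Fin n) (L : MvPolynomial (Fin n) K) :
    MvPolynomial (Fin n) K →ₐ[K] MvPolynomial (Fin n) K :=
  aeval (Function.update X a L)

@[simp] lemma sub1_X_self (a : Fin n) (L : MvPolynomial (Fin n) K) :
    sub1 a L (X a) = L := by
  simp [sub1]

lemma sub1_X_ne (a : Fin n) (L : MvPolynomial (Fin n) K) {i : Fin n} (h : i ≠ a) :
    sub1 a L (X i) = X i := by
  simp [sub1, Function.update_of_ne h]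

@[simp] lemma sub1_C (a : Fin n) (L : MvPolynomial (Fin n) K) (r : K) :
    sub1 a L (C r) = C r := by
  simp [sub1, algebraMap_eq]

lemma dvd_iff_sub1 {a : Fin n} {L : MvPolynomial (Fin n) K} (hL : sub1 a L L = L)
    (Q : MvPolynomial (Fin n) K) : (X a - L) ∣ Q ↔ sub1 a L Q = 0 := by
  constructor
  · rintro ⟨h, rfl⟩
    rw [map_mul, map_sub, sub1_X_self, hL, sub_self, zero_mul]
  · intro hQ
    have hcomp : (Ideal.Quotient.mkₐ K (Ideal.span {(X a - L : MvPolynomial (Fin n) K)})).comp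
        (sub1 a L) = Ideal.Quotient.mkₐ K (Ideal.span {(X a - L : MvPolynomial (Fin n) K)}) := by
      apply algHom_ext
      intro i
      by_cases hi : i = a
      · subst hi
        simp only [AlgHom.comp_apply, sub1_X_self, Ideal.Quotient.mkₐ_eq_mk]
        rw [Ideal.Quotient.eq]
        have hmem : (X i - L : MvPolynomial (Fin n) K) ∈
            Ideal.span {(X i - L : MvPolynomial (Fin n) K)} := Ideal.subset_span rfl
        simpa using neg_mem hmem
      · simp only [AlgHom.comp_apply, sub1_X_ne _ _ hi]
    have h3 := congrArg (fun (F : MvPolynomial (Fin n) K →ₐ[K]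
        (MvPolynomial (Fin n) K ⧸ Ideal.span {(X a - L : MvPolynomial (Fin n) K)})) => F Q) hcomp
    simp only [AlgHom.comp_apply] at h3
    rw [hQ, map_zero] at h3
    rw [← Ideal.mem_span_singleton]
    rw [Ideal.Quotient.mkₐ_eq_mk] at h3
    exact (Ideal.Quotient.eq_zero_iff_mem).mp h3.symm

lemma prime_sub1 {a : Fin n} {L : MvPolynomial (Fin n) K} (hL : sub1 a L L = L)
    (h0 : (X a - L : MvPolynomial (Fin n) K) ≠ 0) : Prime (X a - L) := by
  refine ⟨h0, fun hu => ?_, fun u v huv => ?_⟩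
  · have := (dvd_iff_sub1 hL 1).mp hu.dvd
    rw [map_one] at this
    exact one_ne_zero this
  · have h := (dvd_iff_sub1 hL _).mp huv
    rw [map_mul] at h
    rcases mul_eq_zero.mp h with h | h
    · exact Or.inl ((dvd_iff_sub1 hL u).mpr h)
    · exact Or.inr ((dvd_iff_sub1 hL v).mpr h)

/-! ### Nonvanishing of linear forms -/

lemma CX_add_CX_ne {u v : K} {c d : Fin n} (hcd : c ≠ d) (hu : u ≠ 0) :
    (C u * X c + C v * X d : MvPolynomial (Fin n) K) ≠ 0 := by
  classical
  intro h
  have h2 := congrArg (coeff (Finsupp.single c 1)) h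
  rw [coeff_add, coeff_C_mul, coeff_C_mul, coeff_X', coeff_X', if_pos rfl,
    if_neg (fun hh => hcd ((Finsupp.single_left_inj one_ne_zero).mp hh).symm)] at h2
  simp at h2
  exact hu h2

lemma CX_ne {u : K} (hu : u ≠ 0) (c : Fin n) : (C u * X c : MvPolynomial (Fin n) K) ≠ 0 := by
  apply mul_ne_zero _ (X_ne_zero c)
  intro h
  exact hu (C_injective (Fin n) K (h.trans C_0.symm))

lemma hL_pair {a b : Fin n} (hba : b ≠ a) (s : K) :
    sub1 a (C s * X b) (C s * X b) = C s * X b := by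
  rw [map_mul, sub1_C, sub1_X_ne _ _ hba]

lemma sub1_pp {a b c d : Fin n} {s t : K} (hab : a ≠ b) (hcd : c ≠ d)
    (hs : s = 1 ∨ s = -1) (ht : t = 1 ∨ t = -1)
    (h1 : ¬(a = c ∧ b = d ∧ s = t)) (h2 : ¬(a = d ∧ b = c ∧ s = t)) :
    sub1 a (C s * X b) (X c - C t * X d) ≠ 0 := by
  have hs0 : s ≠ 0 := by rcases hs with rfl | rfl <;> norm_num
  have ht0 : t ≠ 0 := by rcases ht with rfl | rfl <;> norm_num
  rw [map_sub, map_mul, sub1_C]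
  by_cases hca : c = a
  · subst hca
    have hda : d ≠ c := fun h => hcd h.symm
    rw [sub1_X_self, sub1_X_ne _ _ hda]
    by_cases hdb : d = b
    · subst hdb
      have hst : s ≠ t := fun h => h1 ⟨rfl, rfl, h⟩
      have : (C s * X d - C t * X d : MvPolynomial (Fin n) K) = C (s - t) * X d := by
        rw [map_sub]; ring
      rw [this]
      exact CX_ne (sub_ne_zero.mpr hst) d
    · have : (C s * X b - C t * X d : MvPolynomial (Fin n) K) = C s * X b + C (-t) * X d := by
        rw [map_neg]; ring
      rw [this]
      exact CX_add_CX_ne (fun h => hdb h.symm) hs0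
  · rw [sub1_X_ne _ _ hca]
    by_cases hda : d = a
    · subst hda
      rw [sub1_X_self]
      by_cases hcb : c = b
      · subst hcb
        have hst : s ≠ t := fun h => h2 ⟨rfl, rfl, h⟩
        have hts : t * s = -1 := by
          rcases hs with rfl | rfl <;> rcases ht with rfl | rfl <;> first | (exact absurd rfl hst) | ring
        have : (X c - C t * (C s * X c) : MvPolynomial (Fin n) K)
            = C (1 - t * s) * X c := by
          rw [map_sub, C_1, map_mul]; ring
        rw [this, hts]
        refine CX_ne ?_ c
        norm_num
      · have : (X c - C t * (C s * X b) : MvPolynomial (Fin n) K)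
            = C 1 * X c + C (-(t * s)) * X b := by
          rw [map_neg, map_mul, C_1]; ring
        rw [this]
        exact CX_add_CX_ne hcb one_ne_zero
    · rw [sub1_X_ne _ _ hda]
      have : (X c - C t * X d : MvPolynomial (Fin n) K) = C 1 * X c + C (-t) * X d := by
        rw [map_neg, C_1]; ring
      rw [this]
      exact CX_add_CX_ne hcd one_ne_zero

lemma sub1_pc {a b c : Fin n} {s : K} (hab : a ≠ b) (hs : s ≠ 0) :
    sub1 a (C s * X b) (X c) ≠ 0 := by
  by_cases hca : c = a
  · subst hca
    rw [sub1_X_self]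
    exact CX_ne hs b
  · rw [sub1_X_ne _ _ hca]
    exact X_ne_zero c

lemma sub1_cp {a c d : Fin n} {t : K} (hcd : c ≠ d) (ht : t ≠ 0) :
    sub1 a (0 : MvPolynomial (Fin n) K) (X c - C t * X d) ≠ 0 := by
  rw [map_sub, map_mul, sub1_C]
  by_cases hca : c = a
  · subst hca
    have hda : d ≠ c := fun h => hcd h.symm
    rw [sub1_X_self, sub1_X_ne _ _ hda]
    intro h
    have : (C t * X d : MvPolynomial (Fin n) K) = 0 := by
      have := congrArg (fun z => -z) h
      simpa using this
    exact CX_ne ht d this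
  · rw [sub1_X_ne _ _ hca]
    by_cases hda : d = a
    · subst hda
      rw [sub1_X_self, mul_zero, sub_zero]
      exact X_ne_zero c
    · rw [sub1_X_ne _ _ hda]
      have : (X c - C t * X d : MvPolynomial (Fin n) K) = C 1 * X c + C (-t) * X d := by
        rw [map_neg, C_1]; ring
      rw [this]
      exact CX_add_CX_ne hcd one_ne_zero

lemma sub1_cc {a c : Fin n} (h : c ≠ a) :
    sub1 a (0 : MvPolynomial (Fin n) K) (X c) ≠ 0 := by
  rw [sub1_X_ne _ _ h]
  exact X_ne_zero c

end SpechtAux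
namespace SpechtAux

open SpechtBn MvPolynomial

variable {K : Type*} [Field K] [CharZero K] {n : ℕ}

lemma bnAct_X (τ : Fin n → K) (ρ : Equiv.Perm (Fin n)) (i : Fin n) :
    bnAct n K τ ρ (X i) = C (τ (ρ i)) * X (ρ i) := by
  unfold bnAct
  rw [aeval_X]

lemma bnAct_sq (τ : Fin n → K) (hτ : IsSigns τ) (ρ : Equiv.Perm (Fin n)) (a b : Fin n) :
    bnAct n K τ ρ (X a ^ 2 - X b ^ 2) = X (ρ a) ^ 2 - X (ρ b) ^ 2 := by
  have h : ∀ j : Fin n, (C (τ j) * X j : MvPolynomial (Fin n) K) ^ 2 = X j ^ 2 := by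
    intro j
    have hsq : (τ j) ^ 2 = 1 := by rcases hτ j with h | h <;> rw [h] <;> ring
    rw [mul_pow, ← map_pow, hsq, C_1, one_mul]
  rw [map_sub, map_pow, map_pow, bnAct_X, bnAct_X, h, h]

lemma dvd_of_neg {a : Fin n} {L : MvPolynomial (Fin n) K} (hL : sub1 a L L = L)
    {τ : Fin n → K} {ρ : Equiv.Perm (Fin n)}
    (hcomp : ∀ i, sub1 a L (bnAct n K τ ρ (X i)) = sub1 a L (X i))
    {P : MvPolynomial (Fin n) K} (hP : bnAct n K τ ρ P = -P) : (X a - L) ∣ P := by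
  have hc : (sub1 a L).comp (bnAct n K τ ρ) = sub1 a L :=
    algHom_ext fun i => hcomp i
  have h1 : sub1 a L P = - sub1 a L P := by
    conv_lhs => rw [← hc]
    rw [AlgHom.comp_apply, hP, map_neg]
  have h0 : sub1 a L P = 0 := by
    ext m
    have h2 := congrArg (coeff m) h1
    rw [coeff_neg] at h2
    have h3 : (2 : K) * coeff m (sub1 a L P) = 0 := by linear_combination h2
    rw [coeff_zero]
    exact (mul_eq_zero.mp h3).resolve_left two_ne_zero
  exact (dvd_iff_sub1 hL P).mpr h0

lemma prod_primes_dvd {ι : Type} (s : Finset ι) :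
    ∀ F : ι → MvPolynomial (Fin n) K, (∀ i ∈ s, Prime (F i)) →
      (∀ i ∈ s, ∀ j ∈ s, i ≠ j → ¬ F i ∣ F j) →
      ∀ P : MvPolynomial (Fin n) K, (∀ i ∈ s, F i ∣ P) → (∏ i ∈ s, F i) ∣ P := by
  classical
  induction s using Finset.cons_induction with
  | empty => intro F _ _ P _; simpa using one_dvd P
  | cons i s his ih =>
    intro F hp hnd P hd
    obtain ⟨Q, hQ⟩ := hd i (Finset.mem_cons_self i s)
    have hdivQ : ∀ j ∈ s, F j ∣ Q := by
      intro j hj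
      have hji : F j ∣ F i * Q := by
        rw [← hQ]; exact hd j (Finset.mem_cons.mpr (Or.inr hj))
      have hjne : j ≠ i := fun h => his (h ▸ hj)
      rcases (hp j (Finset.mem_cons.mpr (Or.inr hj))).2.2 _ _ hji with h | h
      · exact absurd h (hnd j (Finset.mem_cons.mpr (Or.inr hj)) i (Finset.mem_cons_self i s) hjne)
      · exact h
    have hps : ∀ j ∈ s, Prime (F j) := fun j hj => hp j (Finset.mem_cons.mpr (Or.inr hj))
    have hnds : ∀ j ∈ s, ∀ k ∈ s, j ≠ k → ¬ F j ∣ F k := fun j hj k hk =>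
      hnd j (Finset.mem_cons.mpr (Or.inr hj)) k (Finset.mem_cons.mpr (Or.inr hk))
    rw [Finset.prod_cons, hQ]
    exact mul_dvd_mul_left (F i) (ih F hps hnds Q hdivQ)

/-! ### Sign of a swap acting on column pairs -/

lemma prod_colPairs_swap (f : ℕ → ℕ) (Y : ℕ × ℕ → MvPolynomial (Fin n) K)
    {c₁ c₂ : ℕ × ℕ} (hmem : (c₁, c₂) ∈ colPairs n f) :
    (∏ q ∈ colPairs n f, (Y (Equiv.swap c₁ c₂ q.1) - Y (Equiv.swap c₁ c₂ q.2)))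
      = - ∏ q ∈ colPairs n f, (Y q.1 - Y q.2) := by
  classical
  obtain ⟨⟨hc1, hc2⟩, hcol, hrow⟩ := mem_colPairs.mp hmem
  replace hc1 : c₁ ∈ cellsF n f := hc1
  replace hc2 : c₂ ∈ cellsF n f := hc2
  replace hcol : c₁.2 = c₂.2 := hcol
  replace hrow : c₁.1 < c₂.1 := hrow
  set σ : ℕ × ℕ → ℕ × ℕ := fun c => Equiv.swap c₁ c₂ c with hσdef
  have hσσ : ∀ c, σ (σ c) = c := fun c => Equiv.swap_apply_self _ _ c
  have hσcell : ∀ c ∈ cellsF n f, σ c ∈ cellsF n f := by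
    intro c hc
    by_cases h1 : c = c₁
    · subst h1; simp only [hσdef, Equiv.swap_apply_left]; exact hc2
    by_cases h2 : c = c₂
    · subst h2; simp only [hσdef, Equiv.swap_apply_right]; exact hc1
    · simp only [hσdef, Equiv.swap_apply_of_ne_of_ne h1 h2]; exact hc
  have hσcol : ∀ c, (σ c).2 = c.2 := by
    intro c
    by_cases h1 : c = c₁
    · subst h1; simp only [hσdef, Equiv.swap_apply_left]; exact hcol.symm
    by_cases h2 : c = c₂
    · subst h2; simp only [hσdef, Equiv.swap_apply_right]; exact hcol
    · simp only [hσdef, Equiv.swap_apply_of_ne_of_ne h1 h2]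
  have hσinj : ∀ {u v : ℕ × ℕ}, σ u = σ v → u = v := by
    intro u v h
    have := congrArg σ h
    rwa [hσσ, hσσ] at this
  set κ : (ℕ × ℕ) × (ℕ × ℕ) → (ℕ × ℕ) × (ℕ × ℕ) :=
    fun q => if (σ q.1).1 < (σ q.2).1 then (σ q.1, σ q.2) else (σ q.2, σ q.1) with hκdef
  set sgn : (ℕ × ℕ) × (ℕ × ℕ) → MvPolynomial (Fin n) K :=
    fun q => if (σ q.1).1 < (σ q.2).1 then 1 else -1 with hsgndef
  have hrows : ∀ q ∈ colPairs n f, (σ q.1).1 ≠ (σ q.2).1 := by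
    intro q hq he
    obtain ⟨⟨h1, h2⟩, h3, h4⟩ := mem_colPairs.mp hq
    have heq : σ q.1 = σ q.2 := Prod.ext he (by rw [hσcol, hσcol]; exact h3)
    have := hσinj heq
    rw [this] at h4
    exact lt_irrefl _ h4
  have hκmem : ∀ q ∈ colPairs n f, κ q ∈ colPairs n f := by
    intro q hq
    obtain ⟨⟨h1, h2⟩, h3, h4⟩ := mem_colPairs.mp hq
    have hco : (σ q.1).2 = (σ q.2).2 := by rw [hσcol, hσcol]; exact h3
    by_cases hlt : (σ q.1).1 < (σ q.2).1
    · simp only [hκdef, if_pos hlt]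
      exact mem_colPairs.mpr ⟨⟨hσcell _ h1, hσcell _ h2⟩, hco, hlt⟩
    · simp only [hκdef, if_neg hlt]
      refine mem_colPairs.mpr ⟨⟨hσcell _ h2, hσcell _ h1⟩, hco.symm, ?_⟩
      exact lt_of_le_of_ne (not_lt.mp hlt) fun h => hrows q hq h.symm
  have hκκ : ∀ q ∈ colPairs n f, κ (κ q) = q := by
    intro q hq
    obtain ⟨⟨h1, h2⟩, h3, h4⟩ := mem_colPairs.mp hq
    by_cases hlt : (σ q.1).1 < (σ q.2).1
    · simp only [hκdef, if_pos hlt, hσσ, if_pos h4]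
    · simp only [hκdef, if_neg hlt, hσσ]
      rw [if_neg (by exact fun h => absurd h4 (not_lt.mpr h.le))]
  have hsgnκ : ∀ q ∈ colPairs n f, sgn (κ q) = sgn q := by
    intro q hq
    obtain ⟨⟨h1, h2⟩, h3, h4⟩ := mem_colPairs.mp hq
    by_cases hlt : (σ q.1).1 < (σ q.2).1
    · simp only [hκdef, hsgndef, if_pos hlt, hσσ, if_pos h4]
    · simp only [hκdef, hsgndef, if_neg hlt, hσσ]
      first
      | rfl
      | rw [if_neg (show ¬ q.2.1 < q.1.1 from not_lt.mpr h4.le)]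
  have hfac : ∀ q ∈ colPairs n f,
      Y (σ q.1) - Y (σ q.2) = sgn q * (Y ((κ q).1) - Y ((κ q).2)) := by
    intro q _
    by_cases hlt : (σ q.1).1 < (σ q.2).1
    · simp only [hκdef, hsgndef, if_pos hlt]; ring
    · simp only [hκdef, hsgndef, if_neg hlt]; ring
  have hsgnprod : (∏ q ∈ colPairs n f, sgn q) = -1 := by
    rw [← Finset.mul_prod_erase _ _ hmem]
    have h1 : sgn (c₁, c₂) = -1 := by
      have e1 : σ (c₁, c₂).1 = c₂ := Equiv.swap_apply_left _ _
      have e2 : σ (c₁, c₂).2 = c₁ := Equiv.swap_apply_right _ _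
      show (if (σ (c₁, c₂).1).1 < (σ (c₁, c₂).2).1 then (1 : MvPolynomial (Fin n) K) else -1) = -1
      rw [e1, e2, if_neg (lt_asymm hrow)]
    have h2 : ∏ q ∈ (colPairs n f).erase (c₁, c₂), sgn q = 1 := by
      apply Finset.prod_involution (fun q _ => κ q)
      · intro q hq
        have hq' := Finset.mem_of_mem_erase hq
        rw [hsgnκ q hq']
        by_cases hlt : (σ q.1).1 < (σ q.2).1
        · simp only [hsgndef, if_pos hlt]; ring
        · simp only [hsgndef, if_neg hlt]; ring
      · intro q hq hne heq
        have hq' := Finset.mem_of_mem_erase hq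
        obtain ⟨⟨h1', h2'⟩, h3', h4'⟩ := mem_colPairs.mp hq'
        have hlt : ¬ (σ q.1).1 < (σ q.2).1 := by
          intro hlt
          exact hne (by simp only [hsgndef, if_pos hlt])
        have hκq : κ q = (σ q.2, σ q.1) := by simp only [hκdef, if_neg hlt]
        rw [hκq] at heq
        have e1 : σ q.2 = q.1 := congrArg Prod.fst heq
        have e2 : σ q.1 = q.2 := congrArg Prod.snd heq
        have hne12 : q.1 ≠ q.2 := fun h => absurd (congrArg Prod.fst h) (ne_of_lt h4')
        have hq1mem : q.1 = c₁ ∨ q.1 = c₂ := by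
          by_contra hcon
          push_neg at hcon
          have e3 : σ q.1 = q.1 := Equiv.swap_apply_of_ne_of_ne hcon.1 hcon.2
          rw [e3] at e2
          exact hne12 e2
        rcases hq1mem with ha | ha
        · have hb : q.2 = c₂ := by rw [← e2, ha]; exact Equiv.swap_apply_left _ _
          exact (Finset.mem_erase.mp hq).1 (Prod.ext ha hb)
        · have hb : q.2 = c₁ := by rw [← e2, ha]; exact Equiv.swap_apply_right _ _
          rw [ha, hb] at h4'
          exact lt_asymm hrow h4'
      · intro q hq
        have hq' := Finset.mem_of_mem_erase hq
        refine Finset.mem_erase.mpr ⟨?_, hκmem q hq'⟩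
        intro hcon
        have := hκκ q hq'
        rw [hcon] at this
        have hκc : κ (c₁, c₂) = (c₁, c₂) := by
          have e1 : σ (c₁, c₂).1 = c₂ := Equiv.swap_apply_left _ _
          have e2 : σ (c₁, c₂).2 = c₁ := Equiv.swap_apply_right _ _
          show (if (σ (c₁, c₂).1).1 < (σ (c₁, c₂).2).1
              then (σ (c₁, c₂).1, σ (c₁, c₂).2) else (σ (c₁, c₂).2, σ (c₁, c₂).1)) = (c₁, c₂)
          rw [e1, e2, if_neg (lt_asymm hrow)]
        rw [hκc] at this
        exact (Finset.mem_erase.mp hq).1 this.symm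
      · intro q hq
        exact hκκ q (Finset.mem_of_mem_erase hq)
    rw [h1, h2, mul_one]
  calc (∏ q ∈ colPairs n f, (Y (σ q.1) - Y (σ q.2)))
      = ∏ q ∈ colPairs n f, sgn q * (Y ((κ q).1) - Y ((κ q).2)) :=
        Finset.prod_congr rfl hfac
    _ = (∏ q ∈ colPairs n f, sgn q) * ∏ q ∈ colPairs n f, (Y ((κ q).1) - Y ((κ q).2)) :=
        Finset.prod_mul_distrib
    _ = (∏ q ∈ colPairs n f, sgn q) * ∏ q ∈ colPairs n f, (Y q.1 - Y q.2) := by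
        congr 1
        exact Finset.prod_bij' (fun q _ => κ q) (fun q _ => κ q) hκmem hκmem hκκ hκκ
          (fun q _ => rfl)
    _ = - ∏ q ∈ colPairs n f, (Y q.1 - Y q.2) := by rw [hsgnprod]; ring

end SpechtAux
namespace SpechtAux

open SpechtBn MvPolynomial

variable {K : Type*} [Field K] [CharZero K] {n : ℕ}

set_option maxHeartbeats 1000000

lemma bnAct_speB_left {f g : ℕ → ℕ} (bt : Bitableau n f g) {c₁ c₂ : ℕ × ℕ}
    (hq₀ : (c₁, c₂) ∈ colPairs n f) {ε : K} (hε : ε = 1 ∨ ε = -1) :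
    bnAct n K (fun i => if i = bt.left c₁ ∨ i = bt.left c₂ then ε else 1)
      (Equiv.swap (bt.left c₁) (bt.left c₂)) (speB n K bt) = - speB n K bt := by
  classical
  obtain ⟨⟨hc1, hc2⟩, hcol, hrow⟩ := mem_colPairs.mp hq₀
  replace hc1 : c₁ ∈ cellsF n f := hc1
  replace hc2 : c₂ ∈ cellsF n f := hc2
  replace hrow : c₁.1 < c₂.1 := hrow
  set a := bt.left c₁ with hadef
  set b := bt.left c₂ with hbdef
  set τ : Fin n → K := fun i => if i = a ∨ i = b then ε else 1 with hτdef
  set ρ := Equiv.swap a b with hρdef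
  have hτ : IsSigns τ := by
    intro i
    by_cases h : i = a ∨ i = b
    · rcases hε with rfl | rfl
      · exact Or.inl (if_pos h)
      · exact Or.inr (if_pos h)
    · exact Or.inl (if_neg h)
  have hc12 : c₁ ≠ c₂ := fun h => absurd (congrArg Prod.fst h) (ne_of_lt hrow)
  have hab : a ≠ b := fun h => hc12 (left_injOn bt hc1 hc2 h)
  have hswap : ∀ c ∈ cellsF n f, ρ (bt.left c) = bt.left (Equiv.swap c₁ c₂ c) := by
    intro c hc
    by_cases h1 : c = c₁
    · subst h1
      have er : Equiv.swap c c₂ c = c₂ := Equiv.swap_apply_left _ _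
      have el : ρ (bt.left c) = b := Equiv.swap_apply_left _ _
      rw [er, el, hbdef]
    by_cases h2 : c = c₂
    · subst h2
      have er : Equiv.swap c₁ c c = c₁ := Equiv.swap_apply_right _ _
      have el : ρ (bt.left c) = a := Equiv.swap_apply_right _ _
      rw [er, el, hadef]
    · have er : Equiv.swap c₁ c₂ c = c := Equiv.swap_apply_of_ne_of_ne h1 h2
      have el : ρ (bt.left c) = bt.left c :=
        Equiv.swap_apply_of_ne_of_ne (fun h => h1 (left_injOn bt hc hc1 h))
          (fun h => h2 (left_injOn bt hc hc2 h))
      rw [er, el]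
  have hfixR : ∀ c ∈ cellsF n g, ρ (bt.right c) = bt.right c := by
    intro c hc
    exact Equiv.swap_apply_of_ne_of_ne
      (fun h => left_ne_right bt hc1 hc h.symm) (fun h => left_ne_right bt hc2 hc h.symm)
  have hτR : ∀ c ∈ cellsF n g, τ (bt.right c) = 1 := by
    intro c hc
    refine if_neg ?_
    push_neg
    exact ⟨fun h => left_ne_right bt hc1 hc h.symm, fun h => left_ne_right bt hc2 hc h.symm⟩
  unfold speB
  rw [map_mul, map_mul]
  have e1 : bnAct n K τ ρ (∏ q ∈ colPairs n f, (X (bt.left q.1) ^ 2 - X (bt.left q.2) ^ 2))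
      = - ∏ q ∈ colPairs n f, (X (bt.left q.1) ^ 2 - X (bt.left q.2) ^ 2) := by
    rw [map_prod]
    have hcg : ∀ q ∈ colPairs n f,
        bnAct n K τ ρ (X (bt.left q.1) ^ 2 - X (bt.left q.2) ^ 2)
          = ((fun c => (X (bt.left c) ^ 2 : MvPolynomial (Fin n) K)) (Equiv.swap c₁ c₂ q.1)
            - (fun c => (X (bt.left c) ^ 2 : MvPolynomial (Fin n) K)) (Equiv.swap c₁ c₂ q.2)) := by
      intro q hq
      obtain ⟨⟨h1, h2⟩, -, -⟩ := mem_colPairs.mp hq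
      rw [bnAct_sq τ hτ ρ, hswap _ h1, hswap _ h2]
    rw [Finset.prod_congr rfl hcg]
    exact prod_colPairs_swap f (fun c => (X (bt.left c) ^ 2 : MvPolynomial (Fin n) K)) hq₀
  have e2 : bnAct n K τ ρ (∏ q ∈ colPairs n g, (X (bt.right q.1) ^ 2 - X (bt.right q.2) ^ 2))
      = ∏ q ∈ colPairs n g, (X (bt.right q.1) ^ 2 - X (bt.right q.2) ^ 2) := by
    rw [map_prod]
    apply Finset.prod_congr rfl
    intro q hq
    obtain ⟨⟨h1, h2⟩, -, -⟩ := mem_colPairs.mp hq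
    rw [bnAct_sq τ hτ ρ, hfixR _ h1, hfixR _ h2]
  have e3 : bnAct n K τ ρ (∏ c ∈ cellsF n g, X (bt.right c))
      = ∏ c ∈ cellsF n g, X (bt.right c) := by
    rw [map_prod]
    apply Finset.prod_congr rfl
    intro c hc
    rw [bnAct_X, hfixR _ hc, hτR _ hc, C_1, one_mul]
  rw [e1, e2, e3]
  ring

lemma bnAct_speB_right {f g : ℕ → ℕ} (bt : Bitableau n f g) {c₁ c₂ : ℕ × ℕ}
    (hq₀ : (c₁, c₂) ∈ colPairs n g) {ε : K} (hε : ε = 1 ∨ ε = -1) :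
    bnAct n K (fun i => if i = bt.right c₁ ∨ i = bt.right c₂ then ε else 1)
      (Equiv.swap (bt.right c₁) (bt.right c₂)) (speB n K bt) = - speB n K bt := by
  classical
  obtain ⟨⟨hc1, hc2⟩, hcol, hrow⟩ := mem_colPairs.mp hq₀
  replace hc1 : c₁ ∈ cellsF n g := hc1
  replace hc2 : c₂ ∈ cellsF n g := hc2
  replace hrow : c₁.1 < c₂.1 := hrow
  set a := bt.right c₁ with hadef
  set b := bt.right c₂ with hbdef
  set τ : Fin n → K := fun i => if i = a ∨ i = b then ε else 1 with hτdef
  set ρ := Equiv.swap a b with hρdef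
  have hτ : IsSigns τ := by
    intro i
    by_cases h : i = a ∨ i = b
    · rcases hε with rfl | rfl
      · exact Or.inl (if_pos h)
      · exact Or.inr (if_pos h)
    · exact Or.inl (if_neg h)
  have hc12 : c₁ ≠ c₂ := fun h => absurd (congrArg Prod.fst h) (ne_of_lt hrow)
  have hab : a ≠ b := fun h => hc12 (right_injOn bt hc1 hc2 h)
  have hswap : ∀ c ∈ cellsF n g, ρ (bt.right c) = bt.right (Equiv.swap c₁ c₂ c) := by
    intro c hc
    by_cases h1 : c = c₁
    · subst h1
      have er : Equiv.swap c c₂ c = c₂ := Equiv.swap_apply_left _ _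
      have el : ρ (bt.right c) = b := Equiv.swap_apply_left _ _
      rw [er, el, hbdef]
    by_cases h2 : c = c₂
    · subst h2
      have er : Equiv.swap c₁ c c = c₁ := Equiv.swap_apply_right _ _
      have el : ρ (bt.right c) = a := Equiv.swap_apply_right _ _
      rw [er, el, hadef]
    · have er : Equiv.swap c₁ c₂ c = c := Equiv.swap_apply_of_ne_of_ne h1 h2
      have el : ρ (bt.right c) = bt.right c :=
        Equiv.swap_apply_of_ne_of_ne (fun h => h1 (right_injOn bt hc hc1 h))
          (fun h => h2 (right_injOn bt hc hc2 h))
      rw [er, el]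
  have hfixL : ∀ c ∈ cellsF n f, ρ (bt.left c) = bt.left c := by
    intro c hc
    exact Equiv.swap_apply_of_ne_of_ne
      (fun h => left_ne_right bt hc hc1 h) (fun h => left_ne_right bt hc hc2 h)
  have hcellmap : ∀ c ∈ cellsF n g, Equiv.swap c₁ c₂ c ∈ cellsF n g := by
    intro c hc
    by_cases h1 : c = c₁
    · subst h1; rw [Equiv.swap_apply_left]; exact hc2
    by_cases h2 : c = c₂
    · subst h2; rw [Equiv.swap_apply_right]; exact hc1
    · rw [Equiv.swap_apply_of_ne_of_ne h1 h2]; exact hc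
  unfold speB
  rw [map_mul, map_mul]
  have e1 : bnAct n K τ ρ (∏ q ∈ colPairs n f, (X (bt.left q.1) ^ 2 - X (bt.left q.2) ^ 2))
      = ∏ q ∈ colPairs n f, (X (bt.left q.1) ^ 2 - X (bt.left q.2) ^ 2) := by
    rw [map_prod]
    apply Finset.prod_congr rfl
    intro q hq
    obtain ⟨⟨h1, h2⟩, -, -⟩ := mem_colPairs.mp hq
    rw [bnAct_sq τ hτ ρ, hfixL _ h1, hfixL _ h2]
  have e2 : bnAct n K τ ρ (∏ q ∈ colPairs n g, (X (bt.right q.1) ^ 2 - X (bt.right q.2) ^ 2))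
      = - ∏ q ∈ colPairs n g, (X (bt.right q.1) ^ 2 - X (bt.right q.2) ^ 2) := by
    rw [map_prod]
    have hcg : ∀ q ∈ colPairs n g,
        bnAct n K τ ρ (X (bt.right q.1) ^ 2 - X (bt.right q.2) ^ 2)
          = ((fun c => (X (bt.right c) ^ 2 : MvPolynomial (Fin n) K)) (Equiv.swap c₁ c₂ q.1)
            - (fun c => (X (bt.right c) ^ 2 : MvPolynomial (Fin n) K)) (Equiv.swap c₁ c₂ q.2)) := by
      intro q hq
      obtain ⟨⟨h1, h2⟩, -, -⟩ := mem_colPairs.mp hq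
      rw [bnAct_sq τ hτ ρ, hswap _ h1, hswap _ h2]
    rw [Finset.prod_congr rfl hcg]
    exact prod_colPairs_swap g (fun c => (X (bt.right c) ^ 2 : MvPolynomial (Fin n) K)) hq₀
  have e3 : bnAct n K τ ρ (∏ c ∈ cellsF n g, X (bt.right c))
      = ∏ c ∈ cellsF n g, X (bt.right c) := by
    rw [map_prod]
    have hcg : ∀ c ∈ cellsF n g, bnAct n K τ ρ (X (bt.right c))
        = (fun c => (C (τ (bt.right c)) * X (bt.right c) : MvPolynomial (Fin n) K))
            (Equiv.swap c₁ c₂ c) := by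
      intro c hc
      rw [bnAct_X, hswap _ hc]
    rw [Finset.prod_congr rfl hcg]
    have hre : (∏ c ∈ cellsF n g,
          (fun c => (C (τ (bt.right c)) * X (bt.right c) : MvPolynomial (Fin n) K))
            (Equiv.swap c₁ c₂ c))
        = ∏ c ∈ cellsF n g, (C (τ (bt.right c)) * X (bt.right c) : MvPolynomial (Fin n) K) :=
      Finset.prod_bij' (fun c _ => Equiv.swap c₁ c₂ c) (fun c _ => Equiv.swap c₁ c₂ c)
        hcellmap hcellmap (fun c _ => Equiv.swap_apply_self _ _ _)
        (fun c _ => Equiv.swap_apply_self _ _ _) (fun c _ => rfl)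
    rw [hre]
    rw [Finset.prod_mul_distrib, ← map_prod (C : K →+* MvPolynomial (Fin n) K)]
    have hτprod : ∏ c ∈ cellsF n g, τ (bt.right c) = 1 := by
      rw [← Finset.mul_prod_erase _ _ hc1]
      have hc2' : c₂ ∈ (cellsF n g).erase c₁ := Finset.mem_erase.mpr ⟨hc12.symm, hc2⟩
      rw [← Finset.mul_prod_erase _ _ hc2']
      have h1 : τ (bt.right c₁) = ε := if_pos (Or.inl rfl)
      have h2 : τ (bt.right c₂) = ε := if_pos (Or.inr rfl)
      have h3 : ∏ c ∈ ((cellsF n g).erase c₁).erase c₂, τ (bt.right c) = 1 := by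
        apply Finset.prod_eq_one
        intro c hc
        obtain ⟨hne2, hmem2⟩ := Finset.mem_erase.mp hc
        obtain ⟨hne1, hmem1⟩ := Finset.mem_erase.mp hmem2
        refine if_neg ?_
        push_neg
        exact ⟨fun h => hne1 (right_injOn bt hmem1 hc1 h),
          fun h => hne2 (right_injOn bt hmem1 hc2 h)⟩
      rw [h1, h2, h3]
      rcases hε with rfl | rfl <;> ring
    rw [hτprod, C_1, one_mul]
  rw [e1, e2, e3]
  ring

lemma bnAct_speB_cell {f g : ℕ → ℕ} (bt : Bitableau n f g) {c₀ : ℕ × ℕ}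
    (hc₀ : c₀ ∈ cellsF n g) :
    bnAct n K (fun i => if i = bt.right c₀ then (-1 : K) else 1) 1 (speB n K bt)
      = - speB n K bt := by
  classical
  set τ : Fin n → K := fun i => if i = bt.right c₀ then (-1 : K) else 1 with hτdef
  have hτ : IsSigns τ := by
    intro i
    by_cases h : i = bt.right c₀
    · exact Or.inr (if_pos h)
    · exact Or.inl (if_neg h)
  unfold speB
  rw [map_mul, map_mul]
  have e1 : bnAct n K τ 1 (∏ q ∈ colPairs n f, (X (bt.left q.1) ^ 2 - X (bt.left q.2) ^ 2))
      = ∏ q ∈ colPairs n f, (X (bt.left q.1) ^ 2 - X (bt.left q.2) ^ 2) := by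
    rw [map_prod]
    apply Finset.prod_congr rfl
    intro q hq
    rw [bnAct_sq τ hτ 1, Equiv.Perm.one_apply, Equiv.Perm.one_apply]
  have e2 : bnAct n K τ 1 (∏ q ∈ colPairs n g, (X (bt.right q.1) ^ 2 - X (bt.right q.2) ^ 2))
      = ∏ q ∈ colPairs n g, (X (bt.right q.1) ^ 2 - X (bt.right q.2) ^ 2) := by
    rw [map_prod]
    apply Finset.prod_congr rfl
    intro q hq
    rw [bnAct_sq τ hτ 1, Equiv.Perm.one_apply, Equiv.Perm.one_apply]
  have e3 : bnAct n K τ 1 (∏ c ∈ cellsF n g, X (bt.right c))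
      = - ∏ c ∈ cellsF n g, X (bt.right c) := by
    rw [map_prod]
    have hcg : ∀ c ∈ cellsF n g, bnAct n K τ 1 (X (bt.right c))
        = C (τ (bt.right c)) * X (bt.right c) := by
      intro c hc
      rw [bnAct_X, Equiv.Perm.one_apply]
    rw [Finset.prod_congr rfl hcg, Finset.prod_mul_distrib,
      ← map_prod (C : K →+* MvPolynomial (Fin n) K)]
    have hτprod : ∏ c ∈ cellsF n g, τ (bt.right c) = -1 := by
      rw [← Finset.mul_prod_erase _ _ hc₀]
      have h1 : τ (bt.right c₀) = -1 := if_pos rfl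
      have h3 : ∏ c ∈ (cellsF n g).erase c₀, τ (bt.right c) = 1 := by
        apply Finset.prod_eq_one
        intro c hc
        obtain ⟨hne, hmem⟩ := Finset.mem_erase.mp hc
        exact if_neg fun h => hne (right_injOn bt hmem hc₀ h)
      rw [h1, h3, mul_one]
    rw [hτprod, map_neg, C_1, neg_one_mul]
  rw [e1, e2, e3]
  ring

end SpechtAux
namespace SpechtAux

open SpechtBn MvPolynomial

variable {K : Type*} [Field K] [CharZero K] {n : ℕ}

set_option maxHeartbeats 1000000

/-- The family of prime linear factors of a `B_n`-Specht polynomial. -/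
noncomputable def primFam {f g : ℕ → ℕ} (bt : Bitableau n f g) (K : Type*) [Field K] :
    ((ℕ × ℕ) × (ℕ × ℕ)) × Bool ⊕ (((ℕ × ℕ) × (ℕ × ℕ)) × Bool ⊕ ℕ × ℕ) →
      MvPolynomial (Fin n) K
  | .inl x => X (bt.left x.1.1) - C (cond x.2 1 (-1)) * X (bt.left x.1.2)
  | .inr (.inl x) => X (bt.right x.1.1) - C (cond x.2 1 (-1)) * X (bt.right x.1.2)
  | .inr (.inr c) => X (bt.right c)

/-- The index set of `primFam`. -/
noncomputable def famSet (n : ℕ) (f g : ℕ → ℕ) :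
    Finset (((ℕ × ℕ) × (ℕ × ℕ)) × Bool ⊕ (((ℕ × ℕ) × (ℕ × ℕ)) × Bool ⊕ ℕ × ℕ)) :=
  (colPairs n f ×ˢ Finset.univ).disjSum ((colPairs n g ×ˢ Finset.univ).disjSum (cellsF n g))

lemma cond_sign (bb : Bool) : (cond bb (1 : K) (-1)) = 1 ∨ (cond bb (1 : K) (-1)) = -1 := by
  cases bb
  · exact Or.inr rfl
  · exact Or.inl rfl

lemma cond_ne_zero (bb : Bool) : (cond bb (1 : K) (-1)) ≠ 0 := by
  rcases cond_sign (K := K) bb with h | h <;> rw [h] <;> norm_num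

lemma cond_inj {bb cc : Bool} (h : (cond bb (1 : K) (-1)) = cond cc 1 (-1)) : bb = cc := by
  cases bb <;> cases cc <;> first
    | rfl
    | (exfalso
       simp only [cond] at h
       first
         | exact (by norm_num : (-1 : K) ≠ 1) h
         | exact (by norm_num : (1 : K) ≠ -1) h)

lemma prod_primFam {f g : ℕ → ℕ} (bt : Bitableau n f g) :
    (∏ i ∈ famSet n f g, primFam bt K i) = speB n K bt := by
  classical
  have hpb : ∀ a b' : Fin n,
      (∏ bb : Bool, (X a - C (cond bb (1 : K) (-1)) * X b'))
        = (X a ^ 2 - X b' ^ 2 : MvPolynomial (Fin n) K) := by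
    intro a b'
    rw [Fintype.prod_bool]
    show (X a - C (1 : K) * X b') * (X a - C (-1 : K) * X b') = _
    rw [map_neg, C_1]
    ring
  have e1 : (∏ x ∈ colPairs n f ×ˢ (Finset.univ : Finset Bool), primFam bt K (Sum.inl x))
      = ∏ q ∈ colPairs n f, (X (bt.left q.1) ^ 2 - X (bt.left q.2) ^ 2) := by
    rw [Finset.prod_product]
    apply Finset.prod_congr rfl
    intro q _
    show (∏ bb : Bool, (X (bt.left q.1) - C (cond bb (1 : K) (-1)) * X (bt.left q.2))) = _
    exact hpb _ _
  have e2 : (∏ x ∈ colPairs n g ×ˢ (Finset.univ : Finset Bool),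
        primFam bt K (Sum.inr (Sum.inl x)))
      = ∏ q ∈ colPairs n g, (X (bt.right q.1) ^ 2 - X (bt.right q.2) ^ 2) := by
    rw [Finset.prod_product]
    apply Finset.prod_congr rfl
    intro q _
    show (∏ bb : Bool, (X (bt.right q.1) - C (cond bb (1 : K) (-1)) * X (bt.right q.2))) = _
    exact hpb _ _
  have e3 : (∏ c ∈ cellsF n g, primFam bt K (Sum.inr (Sum.inr c)))
      = ∏ c ∈ cellsF n g, X (bt.right c) := Finset.prod_congr rfl fun c _ => rfl
  unfold famSet
  rw [Finset.prod_disjSum, Finset.prod_disjSum, e1, e2, e3, ← mul_assoc]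
  rfl

lemma mem_famSet_inl {f g : ℕ → ℕ} {x : ((ℕ × ℕ) × (ℕ × ℕ)) × Bool} :
    (Sum.inl x ∈ famSet n f g) ↔ x.1 ∈ colPairs n f := by
  unfold famSet
  rw [Finset.inl_mem_disjSum, Finset.mem_product]
  simp

lemma mem_famSet_inrl {f g : ℕ → ℕ} {x : ((ℕ × ℕ) × (ℕ × ℕ)) × Bool} :
    (Sum.inr (Sum.inl x) ∈ famSet n f g) ↔ x.1 ∈ colPairs n g := by
  unfold famSet
  rw [Finset.inr_mem_disjSum, Finset.inl_mem_disjSum, Finset.mem_product]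
  simp

lemma mem_famSet_inrr {f g : ℕ → ℕ} {c : ℕ × ℕ} :
    (Sum.inr (Sum.inr c) ∈ famSet n f g) ↔ c ∈ cellsF n g := by
  unfold famSet
  rw [Finset.inr_mem_disjSum, Finset.inr_mem_disjSum]

section FamFacts

variable {f g : ℕ → ℕ} (bt : Bitableau n f g)

lemma pair_entry_ne_left {q : (ℕ × ℕ) × (ℕ × ℕ)} (hq : q ∈ colPairs n f) :
    bt.left q.1 ≠ bt.left q.2 := by
  obtain ⟨⟨h1, h2⟩, -, hr⟩ := mem_colPairs.mp hq
  exact fun h => absurd (congrArg Prod.fst (left_injOn bt h1 h2 h)) (ne_of_lt hr)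

lemma pair_entry_ne_right {q : (ℕ × ℕ) × (ℕ × ℕ)} (hq : q ∈ colPairs n g) :
    bt.right q.1 ≠ bt.right q.2 := by
  obtain ⟨⟨h1, h2⟩, -, hr⟩ := mem_colPairs.mp hq
  exact fun h => absurd (congrArg Prod.fst (right_injOn bt h1 h2 h)) (ne_of_lt hr)

lemma primFam_prime : ∀ i ∈ famSet n f g, Prime (primFam bt K i) := by
  intro i hi
  rcases i with ⟨q, bb⟩ | ⟨q, bb⟩ | c
  · rw [mem_famSet_inl] at hi
    replace hi : q ∈ colPairs n f := hi
    have hab : bt.left q.1 ≠ bt.left q.2 := pair_entry_ne_left bt hi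
    refine prime_sub1 (hL_pair (fun h => hab h.symm) _) ?_
    have hrw : (X (bt.left q.1) - C (cond bb (1 : K) (-1)) * X (bt.left q.2)
        : MvPolynomial (Fin n) K)
        = C 1 * X (bt.left q.1) + C (-(cond bb (1 : K) (-1))) * X (bt.left q.2) := by
      rw [map_neg, C_1]; ring
    rw [hrw]
    exact CX_add_CX_ne hab one_ne_zero
  · rw [mem_famSet_inrl] at hi
    replace hi : q ∈ colPairs n g := hi
    have hab : bt.right q.1 ≠ bt.right q.2 := pair_entry_ne_right bt hi
    refine prime_sub1 (hL_pair (fun h => hab h.symm) _) ?_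
    have hrw : (X (bt.right q.1) - C (cond bb (1 : K) (-1)) * X (bt.right q.2)
        : MvPolynomial (Fin n) K)
        = C 1 * X (bt.right q.1) + C (-(cond bb (1 : K) (-1))) * X (bt.right q.2) := by
      rw [map_neg, C_1]; ring
    rw [hrw]
    exact CX_add_CX_ne hab one_ne_zero
  · have h := prime_sub1 (a := bt.right c) (L := (0 : MvPolynomial (Fin n) K))
      (map_zero _) (by rw [sub_zero]; exact X_ne_zero _)
    rw [sub_zero] at h
    exact h

lemma primFam_not_dvd :
    ∀ i ∈ famSet n f g, ∀ j ∈ famSet n f g, i ≠ j → ¬ primFam bt K i ∣ primFam bt K j := by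
  intro i hi j hj hij hdvd
  rcases i with ⟨q, bb⟩ | ⟨q, bb⟩ | c
  · rw [mem_famSet_inl] at hi
    replace hi : q ∈ colPairs n f := hi
    obtain ⟨⟨hi1, hi2⟩, -, hirow⟩ := mem_colPairs.mp hi
    replace hi1 : q.1 ∈ cellsF n f := hi1
    replace hi2 : q.2 ∈ cellsF n f := hi2
    replace hirow : q.1.1 < q.2.1 := hirow
    have hab : bt.left q.1 ≠ bt.left q.2 := pair_entry_ne_left bt hi
    have h0 := (dvd_iff_sub1 (hL_pair (fun h => hab h.symm) _) _).mp hdvd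
    rcases j with ⟨q', cc⟩ | ⟨q', cc⟩ | c'
    · rw [mem_famSet_inl] at hj
      replace hj : q' ∈ colPairs n f := hj
      obtain ⟨⟨hj1, hj2⟩, -, hjrow⟩ := mem_colPairs.mp hj
      replace hj1 : q'.1 ∈ cellsF n f := hj1
      replace hj2 : q'.2 ∈ cellsF n f := hj2
      replace hjrow : q'.1.1 < q'.2.1 := hjrow
      have hcd : bt.left q'.1 ≠ bt.left q'.2 := pair_entry_ne_left bt hj
      refine sub1_pp hab hcd (cond_sign bb) (cond_sign cc) ?_ ?_ h0
      · rintro ⟨e1, e2, e3⟩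
        have hq1 : q.1 = q'.1 := left_injOn bt hi1 hj1 e1
        have hq2 : q.2 = q'.2 := left_injOn bt hi2 hj2 e2
        exact hij (by rw [Prod.ext hq1 hq2, cond_inj e3])
      · rintro ⟨e1, e2, -⟩
        have hq1 : q.1 = q'.2 := left_injOn bt hi1 hj2 e1
        have hq2 : q.2 = q'.1 := left_injOn bt hi2 hj1 e2
        rw [hq1, hq2] at hirow
        exact absurd hjrow (by omega)
    · rw [mem_famSet_inrl] at hj
      replace hj : q' ∈ colPairs n g := hj
      obtain ⟨⟨hj1, hj2⟩, -, -⟩ := mem_colPairs.mp hj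
      replace hj1 : q'.1 ∈ cellsF n g := hj1
      replace hj2 : q'.2 ∈ cellsF n g := hj2
      have hcd : bt.right q'.1 ≠ bt.right q'.2 := pair_entry_ne_right bt hj
      refine sub1_pp hab hcd (cond_sign bb) (cond_sign cc) ?_ ?_ h0
      · rintro ⟨e1, -, -⟩
        exact left_ne_right bt hi1 hj1 e1
      · rintro ⟨e1, -, -⟩
        exact left_ne_right bt hi1 hj2 e1
    · rw [mem_famSet_inrr] at hj
      exact sub1_pc hab (cond_ne_zero bb) h0
  · rw [mem_famSet_inrl] at hi
    replace hi : q ∈ colPairs n g := hi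
    obtain ⟨⟨hi1, hi2⟩, -, hirow⟩ := mem_colPairs.mp hi
    replace hi1 : q.1 ∈ cellsF n g := hi1
    replace hi2 : q.2 ∈ cellsF n g := hi2
    replace hirow : q.1.1 < q.2.1 := hirow
    have hab : bt.right q.1 ≠ bt.right q.2 := pair_entry_ne_right bt hi
    have h0 := (dvd_iff_sub1 (hL_pair (fun h => hab h.symm) _) _).mp hdvd
    rcases j with ⟨q', cc⟩ | ⟨q', cc⟩ | c'
    · rw [mem_famSet_inl] at hj
      replace hj : q' ∈ colPairs n f := hj
      obtain ⟨⟨hj1, hj2⟩, -, -⟩ := mem_colPairs.mp hj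
      replace hj1 : q'.1 ∈ cellsF n f := hj1
      replace hj2 : q'.2 ∈ cellsF n f := hj2
      have hcd : bt.left q'.1 ≠ bt.left q'.2 := pair_entry_ne_left bt hj
      refine sub1_pp hab hcd (cond_sign bb) (cond_sign cc) ?_ ?_ h0
      · rintro ⟨e1, -, -⟩
        exact left_ne_right bt hj1 hi1 e1.symm
      · rintro ⟨e1, -, -⟩
        exact left_ne_right bt hj2 hi1 e1.symm
    · rw [mem_famSet_inrl] at hj
      replace hj : q' ∈ colPairs n g := hj
      obtain ⟨⟨hj1, hj2⟩, -, hjrow⟩ := mem_colPairs.mp hj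
      replace hj1 : q'.1 ∈ cellsF n g := hj1
      replace hj2 : q'.2 ∈ cellsF n g := hj2
      replace hjrow : q'.1.1 < q'.2.1 := hjrow
      have hcd : bt.right q'.1 ≠ bt.right q'.2 := pair_entry_ne_right bt hj
      refine sub1_pp hab hcd (cond_sign bb) (cond_sign cc) ?_ ?_ h0
      · rintro ⟨e1, e2, e3⟩
        have hq1 : q.1 = q'.1 := right_injOn bt hi1 hj1 e1
        have hq2 : q.2 = q'.2 := right_injOn bt hi2 hj2 e2
        exact hij (by rw [Prod.ext hq1 hq2, cond_inj e3])
      · rintro ⟨e1, e2, -⟩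
        have hq1 : q.1 = q'.2 := right_injOn bt hi1 hj2 e1
        have hq2 : q.2 = q'.1 := right_injOn bt hi2 hj1 e2
        rw [hq1, hq2] at hirow
        exact absurd hjrow (by omega)
    · rw [mem_famSet_inrr] at hj
      exact sub1_pc hab (cond_ne_zero bb) h0
  · rw [mem_famSet_inrr] at hi
    rcases j with ⟨q', cc⟩ | ⟨q', cc⟩ | c'
    · rw [mem_famSet_inl] at hj
      replace hj : q' ∈ colPairs n f := hj
      have hcd : bt.left q'.1 ≠ bt.left q'.2 := pair_entry_ne_left bt hj
      have h0 : sub1 (bt.right c) (0 : MvPolynomial (Fin n) K)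
          (X (bt.left q'.1) - C (cond cc (1 : K) (-1)) * X (bt.left q'.2)) = 0 :=
        (dvd_iff_sub1 (map_zero _) _).mp (by rw [sub_zero]; exact hdvd)
      exact sub1_cp hcd (cond_ne_zero cc) h0
    · rw [mem_famSet_inrl] at hj
      replace hj : q' ∈ colPairs n g := hj
      have hcd : bt.right q'.1 ≠ bt.right q'.2 := pair_entry_ne_right bt hj
      have h0 : sub1 (bt.right c) (0 : MvPolynomial (Fin n) K)
          (X (bt.right q'.1) - C (cond cc (1 : K) (-1)) * X (bt.right q'.2)) = 0 :=
        (dvd_iff_sub1 (map_zero _) _).mp (by rw [sub_zero]; exact hdvd)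
      exact sub1_cp hcd (cond_ne_zero cc) h0
    · rw [mem_famSet_inrr] at hj
      have hcc : c' ≠ c := fun h => hij (by rw [h])
      have h0 : sub1 (bt.right c) (0 : MvPolynomial (Fin n) K) (X (bt.right c')) = 0 :=
        (dvd_iff_sub1 (map_zero _) _).mp (by rw [sub_zero]; exact hdvd)
      exact sub1_cc (fun h => hcc (right_injOn bt hj hi h)) h0

lemma primFam_dvd (P : MvPolynomial (Fin n) K)
    (hneg : ∀ τ : Fin n → K, IsSigns τ → ∀ ρ : Equiv.Perm (Fin n),
      bnAct n K τ ρ (speB n K bt) = - speB n K bt → bnAct n K τ ρ P = - P) :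
    ∀ i ∈ famSet n f g, primFam bt K i ∣ P := by
  intro i hi
  rcases i with ⟨q, bb⟩ | ⟨q, bb⟩ | c
  · rw [mem_famSet_inl] at hi
    replace hi : q ∈ colPairs n f := hi
    have hab : bt.left q.1 ≠ bt.left q.2 := pair_entry_ne_left bt hi
    set a := bt.left q.1 with hadef
    set b := bt.left q.2 with hbdef
    set s := cond bb (1 : K) (-1) with hsdef
    have hss : s * s = 1 := by rcases cond_sign (K := K) bb with h | h <;>
      rw [← hsdef] at h <;> rw [h] <;> ring
    have hτ : IsSigns (fun i => if i = a ∨ i = b then s else (1 : K)) := by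
      intro i
      by_cases h : i = a ∨ i = b
      · rcases cond_sign (K := K) bb with hh | hh <;> rw [← hsdef] at hh
        · exact Or.inl (by simp only [if_pos h, hh])
        · exact Or.inr (by simp only [if_pos h, hh])
      · exact Or.inl (if_neg h)
    have hq' : (q.1, q.2) ∈ colPairs n f := hi
    have hP := hneg _ hτ _ (bnAct_speB_left bt hq' (cond_sign bb))
    have hcomp : ∀ i0, sub1 a (C s * X b)
        (bnAct n K (fun i => if i = a ∨ i = b then s else 1) (Equiv.swap a b) (X i0))
          = sub1 a (C s * X b) (X i0) := by
      intro i0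
      rw [bnAct_X]
      by_cases hia : i0 = a
      · subst hia
        rw [Equiv.swap_apply_left, if_pos (Or.inr rfl), map_mul, sub1_C,
          sub1_X_ne _ _ (Ne.symm hab), sub1_X_self]
      · by_cases hib : i0 = b
        · subst hib
          rw [Equiv.swap_apply_right, if_pos (Or.inl rfl), map_mul, sub1_C, sub1_X_self,
            sub1_X_ne _ _ hia, ← mul_assoc, ← C_mul, hss, C_1, one_mul]
        · rw [Equiv.swap_apply_of_ne_of_ne hia hib, if_neg (by tauto), C_1, one_mul]
    exact dvd_of_neg (hL_pair (Ne.symm hab) s) hcomp hP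
  · rw [mem_famSet_inrl] at hi
    replace hi : q ∈ colPairs n g := hi
    have hab : bt.right q.1 ≠ bt.right q.2 := pair_entry_ne_right bt hi
    set a := bt.right q.1 with hadef
    set b := bt.right q.2 with hbdef
    set s := cond bb (1 : K) (-1) with hsdef
    have hss : s * s = 1 := by rcases cond_sign (K := K) bb with h | h <;>
      rw [← hsdef] at h <;> rw [h] <;> ring
    have hτ : IsSigns (fun i => if i = a ∨ i = b then s else (1 : K)) := by
      intro i
      by_cases h : i = a ∨ i = b
      · rcases cond_sign (K := K) bb with hh | hh <;> rw [← hsdef] at hh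
        · exact Or.inl (by simp only [if_pos h, hh])
        · exact Or.inr (by simp only [if_pos h, hh])
      · exact Or.inl (if_neg h)
    have hq' : (q.1, q.2) ∈ colPairs n g := hi
    have hP := hneg _ hτ _ (bnAct_speB_right bt hq' (cond_sign bb))
    have hcomp : ∀ i0, sub1 a (C s * X b)
        (bnAct n K (fun i => if i = a ∨ i = b then s else 1) (Equiv.swap a b) (X i0))
          = sub1 a (C s * X b) (X i0) := by
      intro i0
      rw [bnAct_X]
      by_cases hia : i0 = a
      · subst hia
        rw [Equiv.swap_apply_left, if_pos (Or.inr rfl), map_mul, sub1_C,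
          sub1_X_ne _ _ (Ne.symm hab), sub1_X_self]
      · by_cases hib : i0 = b
        · subst hib
          rw [Equiv.swap_apply_right, if_pos (Or.inl rfl), map_mul, sub1_C, sub1_X_self,
            sub1_X_ne _ _ hia, ← mul_assoc, ← C_mul, hss, C_1, one_mul]
        · rw [Equiv.swap_apply_of_ne_of_ne hia hib, if_neg (by tauto), C_1, one_mul]
    exact dvd_of_neg (hL_pair (Ne.symm hab) s) hcomp hP
  · rw [mem_famSet_inrr] at hi
    replace hi : c ∈ cellsF n g := hi
    set k := bt.right c with hkdef
    have hτ : IsSigns (fun i => if i = k then (-1 : K) else 1) := by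
      intro i
      by_cases h : i = k
      · exact Or.inr (if_pos h)
      · exact Or.inl (if_neg h)
    have hP := hneg _ hτ 1 (bnAct_speB_cell bt hi)
    have hcomp : ∀ i0, sub1 k (0 : MvPolynomial (Fin n) K)
        (bnAct n K (fun i => if i = k then (-1 : K) else 1) 1 (X i0))
          = sub1 k (0 : MvPolynomial (Fin n) K) (X i0) := by
      intro i0
      rw [bnAct_X, Equiv.Perm.one_apply]
      by_cases hik : i0 = k
      · subst hik
        rw [if_pos rfl, map_mul, sub1_X_self, mul_zero]
      · rw [if_neg hik, C_1, one_mul]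
    have h := dvd_of_neg (map_zero (sub1 k (0 : MvPolynomial (Fin n) K))) hcomp hP
    rwa [sub_zero] at h

lemma speB_dvd (P : MvPolynomial (Fin n) K)
    (hneg : ∀ τ : Fin n → K, IsSigns τ → ∀ ρ : Equiv.Perm (Fin n),
      bnAct n K τ ρ (speB n K bt) = - speB n K bt → bnAct n K τ ρ P = - P) :
    speB n K bt ∣ P := by
  rw [← prod_primFam bt]
  exact prod_primes_dvd _ _ (primFam_prime bt) (primFam_not_dvd bt) P (primFam_dvd bt P hneg)

lemma speB_ne_zero : speB n K bt ≠ 0 := by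
  unfold speB
  refine mul_ne_zero (mul_ne_zero ?_ ?_) ?_
  · rw [Finset.prod_ne_zero_iff]
    intro q hq
    have hab : bt.left q.1 ≠ bt.left q.2 := pair_entry_ne_left bt hq
    have hfac : (X (bt.left q.1) ^ 2 - X (bt.left q.2) ^ 2 : MvPolynomial (Fin n) K)
        = (C 1 * X (bt.left q.1) + C (-1) * X (bt.left q.2))
          * (C 1 * X (bt.left q.1) + C 1 * X (bt.left q.2)) := by
      rw [map_neg, C_1]; ring
    rw [hfac]
    exact mul_ne_zero (CX_add_CX_ne hab one_ne_zero) (CX_add_CX_ne hab one_ne_zero)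
  · rw [Finset.prod_ne_zero_iff]
    intro q hq
    have hab : bt.right q.1 ≠ bt.right q.2 := pair_entry_ne_right bt hq
    have hfac : (X (bt.right q.1) ^ 2 - X (bt.right q.2) ^ 2 : MvPolynomial (Fin n) K)
        = (C 1 * X (bt.right q.1) + C (-1) * X (bt.right q.2))
          * (C 1 * X (bt.right q.1) + C 1 * X (bt.right q.2)) := by
      rw [map_neg, C_1]; ring
    rw [hfac]
    exact mul_ne_zero (CX_add_CX_ne hab one_ne_zero) (CX_add_CX_ne hab one_ne_zero)
  · rw [Finset.prod_ne_zero_iff]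
    exact fun c _ => X_ne_zero _

lemma speB_hom : (speB n K bt).IsHomogeneous ((speB n K bt).totalDegree) := by
  obtain ⟨D, hD⟩ : ∃ D, (speB n K bt).IsHomogeneous D := by
    refine ⟨((∑ _q ∈ colPairs n f, 2) + ∑ _q ∈ colPairs n g, 2) + ∑ _c ∈ cellsF n g, 1, ?_⟩
    unfold speB
    exact ((IsHomogeneous.prod _ _ (fun _ => 2)
        (fun q _ => by
          simpa using ((isHomogeneous_X K (bt.left q.1)).pow 2).sub
            ((isHomogeneous_X K (bt.left q.2)).pow 2))).mul
      (IsHomogeneous.prod _ _ (fun _ => 2)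
        (fun q _ => by
          simpa using ((isHomogeneous_X K (bt.right q.1)).pow 2).sub
            ((isHomogeneous_X K (bt.right q.2)).pow 2)))).mul
      (IsHomogeneous.prod _ _ (fun _ => 1) (fun c _ => isHomogeneous_X K (bt.right c)))
  rw [hD.totalDegree (speB_ne_zero bt)]
  exact hD

end FamFacts

lemma deg_add (u v : Fin n →₀ ℕ) : (u + v).degree = u.degree + v.degree := by
  simp [Finsupp.degree_eq_weight_one, map_add]

lemma homogComp_mul {p q : MvPolynomial (Fin n) K} {d : ℕ} (hp : p.IsHomogeneous d) (t : ℕ) :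
    homogeneousComponent (d + t) (p * q) = p * homogeneousComponent t q := by
  classical
  ext m
  rw [coeff_homogeneousComponent, coeff_mul, coeff_mul]
  by_cases hm : m.degree = d + t
  · rw [if_pos hm]
    apply Finset.sum_congr rfl
    rintro ⟨u, v⟩ huv
    rw [coeff_homogeneousComponent]
    by_cases hu : coeff u p = 0
    · rw [hu, zero_mul, zero_mul]
    · have hud : u.degree = d := by
        by_contra hne
        exact hu (hp.coeff_eq_zero hne)
      have hsum : u + v = m := Finset.HasAntidiagonal.mem_antidiagonal.mp huv
      have hv : v.degree = t := by
        have := deg_add u v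
        rw [hsum, hm, hud] at this
        omega
      rw [if_pos hv]
  · rw [if_neg hm]
    symm
    apply Finset.sum_eq_zero
    rintro ⟨u, v⟩ huv
    rw [coeff_homogeneousComponent]
    by_cases hu : coeff u p = 0
    · rw [hu, zero_mul]
    · have hud : u.degree = d := by
        by_contra hne
        exact hu (hp.coeff_eq_zero hne)
      have hsum : u + v = m := Finset.HasAntidiagonal.mem_antidiagonal.mp huv
      have hv : v.degree ≠ t := by
        intro hv
        apply hm
        rw [← hsum, deg_add, hud, hv]
      rw [if_neg hv, mul_zero]

lemma top_ne_zero {h : MvPolynomial (Fin n) K} (hne : h ≠ 0) :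
    homogeneousComponent h.totalDegree h ≠ 0 := by
  obtain ⟨m, hm, hval⟩ := Finset.exists_mem_eq_sup h.support
    (support_nonempty.mpr hne) (fun m : Fin n →₀ ℕ => m.sum fun _ e => e)
  have hdeg : m.degree = h.totalDegree := by
    have h1 : h.totalDegree = m.sum fun _ e => e := hval
    have h2 : (m.sum fun _ e => e) = m.degree := rfl
    rw [h1, h2]
  intro h0
  have hc := congrArg (coeff m) h0
  rw [coeff_homogeneousComponent, if_pos hdeg, coeff_zero] at hc
  exact mem_support_iff.mp hm hc

end SpechtAux
open SpechtBn in
set_option maxHeartbeats 1600000 in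
/-- Proposition 8: any `B_n`-module isomorphic copy of the Specht module `W_{(λ,μ)}`
consists of multiples of the corresponding Specht polynomials; hence it is contained
in `I_{(λ,μ)}`, and in degrees `≤ d₀` the copy is `W_{(λ,μ)}` itself
(multiplicity one). -/
theorem specht_module_multiplicity_one {K : Type*} [Field K] [CharZero K] {n : ℕ}
    (p : Bipartition n) (d₀ : ℕ)
    (hd₀ : ∀ bt : Bitableau n p.l p.m, (speB n K bt).totalDegree = d₀)
    (M : Submodule K (MvPolynomial (Fin n) K))
    (hM : ∀ f ∈ M, ∀ τ : Fin n → K, IsSigns τ →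
      ∀ ρ : Equiv.Perm (Fin n), bnAct n K τ ρ f ∈ M)
    (φ : (Submodule.span K (spechtSet n K p.l p.m)) →ₗ[K] MvPolynomial (Fin n) K)
    (hinj : Function.Injective φ)
    (hrange : LinearMap.range φ = M)
    (hequiv : ∀ (τ : Fin n → K), IsSigns τ → ∀ (ρ : Equiv.Perm (Fin n))
      (w : Submodule.span K (spechtSet n K p.l p.m))
      (hw : bnAct n K τ ρ (w : MvPolynomial (Fin n) K)
          ∈ Submodule.span K (spechtSet n K p.l p.m)),
      φ ⟨bnAct n K τ ρ (w : MvPolynomial (Fin n) K), hw⟩ = bnAct n K τ ρ (φ w)) :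
    (∀ bt : Bitableau n p.l p.m,
        speB n K bt ∣ φ ⟨speB n K bt, Submodule.subset_span ⟨bt, rfl⟩⟩) ∧
    (M : Set (MvPolynomial (Fin n) K)) ⊆ spechtIdeal n K p.l p.m ∧
    ((∀ f ∈ M, MvPolynomial.totalDegree f ≤ d₀) →
        M = Submodule.span K (spechtSet n K p.l p.m)) := by
  classical
  have hdvd : ∀ bt : Bitableau n p.l p.m,
      speB n K bt ∣ φ ⟨speB n K bt, Submodule.subset_span ⟨bt, rfl⟩⟩ := by
    intro bt
    apply SpechtAux.speB_dvd
    intro τ hτ ρ hneg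
    have hmem : speB n K bt ∈ Submodule.span K (spechtSet n K p.l p.m) :=
      Submodule.subset_span ⟨bt, rfl⟩
    have hw : bnAct n K τ ρ (((⟨speB n K bt, hmem⟩ :
        Submodule.span K (spechtSet n K p.l p.m))) : MvPolynomial (Fin n) K)
          ∈ Submodule.span K (spechtSet n K p.l p.m) := by
      show bnAct n K τ ρ (speB n K bt) ∈ _
      rw [hneg]
      exact neg_mem hmem
    have hsub : (⟨bnAct n K τ ρ (speB n K bt), hw⟩ :
        Submodule.span K (spechtSet n K p.l p.m)) = - ⟨speB n K bt, hmem⟩ := by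
      apply Subtype.ext
      exact hneg
    calc bnAct n K τ ρ (φ ⟨speB n K bt, hmem⟩)
        = φ ⟨bnAct n K τ ρ (speB n K bt), hw⟩ := (hequiv τ hτ ρ ⟨speB n K bt, hmem⟩ hw).symm
      _ = φ (- ⟨speB n K bt, hmem⟩) := by rw [hsub]
      _ = - φ ⟨speB n K bt, hmem⟩ := map_neg φ _
  refine ⟨hdvd, ?_, ?_⟩
  · have key : ∀ (y : MvPolynomial (Fin n) K)
        (hy : y ∈ Submodule.span K (spechtSet n K p.l p.m)),
        φ ⟨y, hy⟩ ∈ spechtIdeal n K p.l p.m := by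
      intro y hy
      induction hy using Submodule.span_induction with
      | mem x h =>
        obtain ⟨bt, rfl⟩ := h
        obtain ⟨h', hh'⟩ := hdvd bt
        show φ ⟨speB n K bt, Submodule.subset_span ⟨bt, rfl⟩⟩ ∈ spechtIdeal n K p.l p.m
        rw [hh']
        exact Ideal.mul_mem_right _ _ (Ideal.subset_span ⟨bt, rfl⟩)
      | zero =>
        show φ (0 : Submodule.span K (spechtSet n K p.l p.m)) ∈ spechtIdeal n K p.l p.m
        rw [map_zero]
        exact Ideal.zero_mem _
      | add x y hx hy ihx ihy =>
        show φ (⟨x, hx⟩ + ⟨y, hy⟩) ∈ spechtIdeal n K p.l p.m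
        rw [map_add]
        exact Ideal.add_mem _ ihx ihy
      | smul a x hx ih =>
        show φ (a • ⟨x, hx⟩) ∈ spechtIdeal n K p.l p.m
        rw [map_smul, MvPolynomial.smul_eq_C_mul]
        exact Ideal.mul_mem_left _ _ ih
    intro x hx
    have hx' : x ∈ LinearMap.range φ := by rw [hrange]; exact hx
    obtain ⟨w, rfl⟩ := hx'
    exact key w.1 w.2
  · intro hdeg
    haveI hWfin : FiniteDimensional K (Submodule.span K (spechtSet n K p.l p.m)) := by
      have hle : Submodule.span K (spechtSet n K p.l p.m)
          ≤ MvPolynomial.restrictTotalDegree (Fin n) K d₀ := by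
        rw [Submodule.span_le]
        rintro y ⟨bt, rfl⟩
        rw [SetLike.mem_coe, MvPolynomial.mem_restrictTotalDegree]
        exact (hd₀ bt).le
      exact Submodule.finiteDimensional_of_le hle
    have key2 : ∀ (y : MvPolynomial (Fin n) K)
        (hy : y ∈ Submodule.span K (spechtSet n K p.l p.m)),
        φ ⟨y, hy⟩ ∈ Submodule.span K (spechtSet n K p.l p.m) := by
      intro y hy
      induction hy using Submodule.span_induction with
      | mem x h =>
        obtain ⟨bt, rfl⟩ := h
        obtain ⟨h', hh'⟩ := hdvd bt
        have hne : speB n K bt ≠ 0 := SpechtAux.speB_ne_zero bt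
        have hφne : φ ⟨speB n K bt, Submodule.subset_span ⟨bt, rfl⟩⟩ ≠ 0 := by
          intro h0
          have h1 := hinj (h0.trans (map_zero φ).symm)
          have h2 := congrArg Subtype.val h1
          exact hne h2
        have hh'ne : h' ≠ 0 := by
          intro h0
          rw [h0, mul_zero] at hh'
          exact hφne hh'
        have hdegle : (speB n K bt * h').totalDegree ≤ d₀ := by
          rw [← hh']
          apply hdeg
          rw [← hrange]
          exact ⟨_, rfl⟩
        have ht0 : h'.totalDegree = 0 := by
          by_contra hne0
          have htop := SpechtAux.top_ne_zero (K := K) (n := n) hh'ne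
          have hcm := SpechtAux.homogComp_mul (q := h') (SpechtAux.speB_hom bt) h'.totalDegree
          have hz : MvPolynomial.homogeneousComponent
              ((speB n K bt).totalDegree + h'.totalDegree) (speB n K bt * h') = 0 := by
            apply MvPolynomial.homogeneousComponent_eq_zero
            have hst := hd₀ bt
            omega
          rw [hcm] at hz
          rcases mul_eq_zero.mp hz with h0 | h0
          · exact hne h0
          · exact htop h0
        have hC : h' = MvPolynomial.C (MvPolynomial.coeff 0 h') := by
          have hsum := MvPolynomial.sum_homogeneousComponent h'
          rw [ht0, Finset.sum_range_one, MvPolynomial.homogeneousComponent_zero] at hsum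
          exact hsum.symm
        show φ ⟨speB n K bt, Submodule.subset_span ⟨bt, rfl⟩⟩
            ∈ Submodule.span K (spechtSet n K p.l p.m)
        rw [hh', hC, mul_comm, ← MvPolynomial.smul_eq_C_mul]
        exact Submodule.smul_mem _ _ (Submodule.subset_span ⟨bt, rfl⟩)
      | zero =>
        show φ (0 : Submodule.span K (spechtSet n K p.l p.m))
            ∈ Submodule.span K (spechtSet n K p.l p.m)
        rw [map_zero]
        exact Submodule.zero_mem _
      | add x y hx hy ihx ihy =>
        show φ (⟨x, hx⟩ + ⟨y, hy⟩) ∈ Submodule.span K (spechtSet n K p.l p.m)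
        rw [map_add]
        exact Submodule.add_mem _ ihx ihy
      | smul a x hx ih =>
        show φ (a • ⟨x, hx⟩) ∈ Submodule.span K (spechtSet n K p.l p.m)
        rw [map_smul]
        exact Submodule.smul_mem _ _ ih
    have hMW : M ≤ Submodule.span K (spechtSet n K p.l p.m) := by
      intro x hx
      have hx' : x ∈ LinearMap.range φ := by rw [hrange]; exact hx
      obtain ⟨w, rfl⟩ := hx'
      exact key2 w.1 w.2
    have hrank : Module.finrank K (Submodule.span K (spechtSet n K p.l p.m))
        ≤ Module.finrank K M := by
      rw [← hrange, LinearMap.finrank_range_of_inj hinj]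
    exact Submodule.eq_of_le_of_finrank_le hMW hrank
end

section
/- In the poset (BP_4, ⊴) of bipartitions of 4 with the bidominance order, the elements a = ((2),(1,1)) and b = ((2,2),∅) have no greatest lower bound; in particular, (BP_4, ⊴) is not a lattice. (Indeed c = ((2,1,1),∅) is covered by both a and b, while d = (∅,(2,2)) satisfies d ⊲ a and d ⊲ b, but c and d are incomparable.) -/
namespace SpechtBn

/-- the bipartition `a = ((2),(1,1))` of `4`. -/
def bpA : Bipartition 4 where
  l := fun i => if i = 0 then 2 else 0
  m := fun i => if i < 2 then 1 else 0
  isBP := by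
    refine ⟨⟨?_, ?_⟩, ⟨?_, ?_⟩, ?_⟩
    · intro x y h; dsimp only; split_ifs <;> omega
    · intro i hi; dsimp only; split_ifs <;> omega
    · intro x y h; dsimp only; split_ifs <;> omega
    · intro i hi; dsimp only; split_ifs <;> omega
    · decide

/-- the bipartition `b = ((2,2),∅)` of `4`. -/
def bpB : Bipartition 4 where
  l := fun i => if i < 2 then 2 else 0
  m := fun _ => 0
  isBP := by
    refine ⟨⟨?_, ?_⟩, ⟨?_, ?_⟩, ?_⟩
    · intro x y h; dsimp only; split_ifs <;> omega
    · intro i hi; dsimp only; split_ifs <;> omega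
    · intro x y h; exact le_rfl
    · intro i hi; rfl
    · decide

/-- the bipartition `c = ((2,1,1),∅)` of `4`. -/
def bpC : Bipartition 4 where
  l := fun i => if i = 0 then 2 else if i < 3 then 1 else 0
  m := fun _ => 0
  isBP := by
    refine ⟨⟨?_, ?_⟩, ⟨?_, ?_⟩, ?_⟩
    · intro x y h; dsimp only; split_ifs <;> omega
    · intro i hi; dsimp only; split_ifs <;> omega
    · intro x y h; exact le_rfl
    · intro i hi; rfl
    · decide

/-- the bipartition `d = (∅,(2,2))` of `4`. -/
def bpD : Bipartition 4 where
  l := fun _ => 0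
  m := fun i => if i < 2 then 2 else 0
  isBP := by
    refine ⟨⟨?_, ?_⟩, ⟨?_, ?_⟩, ?_⟩
    · intro x y h; exact le_rfl
    · intro i hi; rfl
    · intro x y h; dsimp only; split_ifs <;> omega
    · intro i hi; dsimp only; split_ifs <;> omega
    · decide

end SpechtBn

namespace SpechtBn

lemma sum_four (p : Bipartition 4) {k : ℕ} (hk : 4 ≤ k) :
    ∑ j ∈ Finset.range k, (p.l j + p.m j) = 4 := by
  obtain ⟨⟨_, hl⟩, ⟨_, hm⟩, hs⟩ := p.isBP
  calc ∑ j ∈ Finset.range k, (p.l j + p.m j)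
      = ∑ j ∈ Finset.range 4, (p.l j + p.m j) :=
        (Finset.sum_subset (Finset.range_subset_range.2 hk) (fun i _ hi => by
          simp [hl i (by simpa using hi), hm i (by simpa using hi)])).symm
    _ = 4 := hs

lemma l_zero (p : Bipartition 4) {k : ℕ} (hk : 4 ≤ k) : p.l k = 0 :=
  p.isBP.1.2 k hk

lemma m_zero (p : Bipartition 4) {k : ℕ} (hk : 4 ≤ k) : p.m k = 0 :=
  p.isBP.2.1.2 k hk

lemma bidom_of (p q : Bipartition 4)
    (h : ∀ k < 4,
      (∑ j ∈ Finset.range k, (q.l j + q.m j) ≤ ∑ j ∈ Finset.range k, (p.l j + p.m j)) ∧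
      ((∑ j ∈ Finset.range k, (q.l j + q.m j)) + q.l k
        ≤ (∑ j ∈ Finset.range k, (p.l j + p.m j)) + p.l k)) : Bidom q p := by
  constructor
  · intro k
    rcases lt_or_ge k 4 with h4 | h4
    · exact (h k h4).1
    · rw [sum_four q h4, sum_four p h4]
  · intro k
    rcases lt_or_ge k 4 with h4 | h4
    · exact (h k h4).2
    · rw [sum_four q h4, sum_four p h4, l_zero q h4, l_zero p h4]

lemma bp_eq {p q : Bipartition 4}
    (h : ∀ i < 4, p.l i = q.l i ∧ p.m i = q.m i) : p = q := by
  have h1 : p.l = q.l := by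
    funext i
    rcases lt_or_ge i 4 with h4 | h4
    · exact (h i h4).1
    · rw [l_zero p h4, l_zero q h4]
  have h2 : p.m = q.m := by
    funext i
    rcases lt_or_ge i 4 with h4 | h4
    · exact (h i h4).2
    · rw [m_zero p h4, m_zero q h4]
  cases p; cases q; simp_all

lemma vals (r : Bipartition 4) :
    r.l 1 ≤ r.l 0 ∧ r.l 2 ≤ r.l 1 ∧ r.l 3 ≤ r.l 2 ∧
    r.m 1 ≤ r.m 0 ∧ r.m 2 ≤ r.m 1 ∧ r.m 3 ≤ r.m 2 ∧
    r.l 0 + r.m 0 + (r.l 1 + r.m 1) + (r.l 2 + r.m 2) + (r.l 3 + r.m 3) = 4 := by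
  obtain ⟨⟨hl, _⟩, ⟨hm, _⟩, hs⟩ := r.isBP
  simp only [Finset.sum_range_succ, Finset.sum_range_zero] at hs
  refine ⟨hl (by omega), hl (by omega), hl (by omega),
    hm (by omega), hm (by omega), hm (by omega), by omega⟩

end SpechtBn

namespace SpechtBn
lemma bpA_l (i : ℕ) : bpA.l i = if i = 0 then 2 else 0 := rfl
lemma bpA_m (i : ℕ) : bpA.m i = if i < 2 then 1 else 0 := rfl
lemma bpB_l (i : ℕ) : bpB.l i = if i < 2 then 2 else 0 := rfl
lemma bpB_m (i : ℕ) : bpB.m i = 0 := rfl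
lemma bpC_l (i : ℕ) : bpC.l i = if i = 0 then 2 else if i < 3 then 1 else 0 := rfl
lemma bpC_m (i : ℕ) : bpC.m i = 0 := rfl
lemma bpD_l (i : ℕ) : bpD.l i = 0 := rfl
lemma bpD_m (i : ℕ) : bpD.m i = if i < 2 then 2 else 0 := rfl

end SpechtBn

set_option maxHeartbeats 2000000 in
open SpechtBn in
/-- `(BP₄, ⊴)` is not a lattice: `a = ((2),(1,1))` and `b = ((2,2),∅)` have no greatest
lower bound; `c = ((2,1,1),∅)` is covered by both, `d = (∅,(2,2))` is below both,
but `c` and `d` are incomparable. -/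
theorem bp4_not_a_lattice :
    BPCovers bpA bpC ∧ BPCovers bpB bpC ∧ Bidom bpD bpA ∧ Bidom bpD bpB ∧
    ¬ Bidom bpC bpD ∧ ¬ Bidom bpD bpC ∧
    ¬ ∃ g : Bipartition 4, Bidom g bpA ∧ Bidom g bpB ∧
        ∀ x : Bipartition 4, Bidom x bpA → Bidom x bpB → Bidom x g := by
  have hCA : Bidom bpC bpA := by
    apply bidom_of; intro k hk; interval_cases k <;>
      simp [bpA_l, bpA_m, bpC_l, bpC_m, Finset.sum_range_succ]
  have hCB : Bidom bpC bpB := by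
    apply bidom_of; intro k hk; interval_cases k <;>
      simp [bpB_l, bpB_m, bpC_l, bpC_m, Finset.sum_range_succ]
  have hDA : Bidom bpD bpA := by
    apply bidom_of; intro k hk; interval_cases k <;>
      simp [bpA_l, bpA_m, bpD_l, bpD_m, Finset.sum_range_succ]
  have hDB : Bidom bpD bpB := by
    apply bidom_of; intro k hk; interval_cases k <;>
      simp [bpB_l, bpB_m, bpD_l, bpD_m, Finset.sum_range_succ]
  have hCneA : bpC ≠ bpA := by
    intro h
    have := congrArg (fun p : Bipartition 4 => p.l 1) h
    simp [bpA_l, bpC_l] at this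
  have hCneB : bpC ≠ bpB := by
    intro h
    have := congrArg (fun p : Bipartition 4 => p.l 1) h
    simp [bpB_l, bpC_l] at this
  refine ⟨⟨hCA, hCneA, ?_⟩, ⟨hCB, hCneB, ?_⟩, hDA, hDB, ?_, ?_, ?_⟩
  · intro r hcr hra
    obtain ⟨a1, a2, a3, b1, b2, b3, hsum⟩ := vals r
    have h1 := hcr.1 1; have h2 := hcr.1 2; have h3 := hcr.1 3
    have g0 := hcr.2 0; have g1 := hcr.2 1; have g2 := hcr.2 2; have g3 := hcr.2 3
    have i1 := hra.1 1; have i2 := hra.1 2; have i3 := hra.1 3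
    have j0 := hra.2 0; have j1 := hra.2 1; have j2 := hra.2 2; have j3 := hra.2 3
    simp only [bpC_l, bpC_m, bpA_l, bpA_m, Finset.sum_range_succ, Finset.sum_range_zero] at h1 h2 h3 g0 g1 g2 g3 i1 i2 i3 j0 j1 j2 j3
    norm_num at h1 h2 h3 g0 g1 g2 g3 i1 i2 i3 j0 j1 j2 j3
    have hkey : (r.l 0 = 2 ∧ r.l 1 = 1 ∧ r.l 2 = 1 ∧ r.l 3 = 0 ∧ r.m 0 = 0 ∧ r.m 1 = 0 ∧ r.m 2 = 0 ∧ r.m 3 = 0) ∨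
        (r.l 0 = 2 ∧ r.l 1 = 0 ∧ r.l 2 = 0 ∧ r.l 3 = 0 ∧ r.m 0 = 1 ∧ r.m 1 = 1 ∧ r.m 2 = 0 ∧ r.m 3 = 0) := by
      omega
    rcases hkey with e | e
    · exact Or.inl (bp_eq fun i hi => by interval_cases i <;> simp [bpC_l, bpC_m] <;> omega)
    · exact Or.inr (bp_eq fun i hi => by interval_cases i <;> simp [bpA_l, bpA_m] <;> omega)
  · intro r hcr hrb
    obtain ⟨a1, a2, a3, b1, b2, b3, hsum⟩ := vals r
    have h1 := hcr.1 1; have h2 := hcr.1 2; have h3 := hcr.1 3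
    have g0 := hcr.2 0; have g1 := hcr.2 1; have g2 := hcr.2 2; have g3 := hcr.2 3
    have i1 := hrb.1 1; have i2 := hrb.1 2; have i3 := hrb.1 3
    have j0 := hrb.2 0; have j1 := hrb.2 1; have j2 := hrb.2 2; have j3 := hrb.2 3
    simp only [bpC_l, bpC_m, bpB_l, bpB_m, Finset.sum_range_succ, Finset.sum_range_zero] at h1 h2 h3 g0 g1 g2 g3 i1 i2 i3 j0 j1 j2 j3
    norm_num at h1 h2 h3 g0 g1 g2 g3 i1 i2 i3 j0 j1 j2 j3
    have hkey : (r.l 0 = 2 ∧ r.l 1 = 1 ∧ r.l 2 = 1 ∧ r.l 3 = 0 ∧ r.m 0 = 0 ∧ r.m 1 = 0 ∧ r.m 2 = 0 ∧ r.m 3 = 0) ∨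
        (r.l 0 = 2 ∧ r.l 1 = 2 ∧ r.l 2 = 0 ∧ r.l 3 = 0 ∧ r.m 0 = 0 ∧ r.m 1 = 0 ∧ r.m 2 = 0 ∧ r.m 3 = 0) := by
      omega
    rcases hkey with e | e
    · exact Or.inl (bp_eq fun i hi => by interval_cases i <;> simp [bpC_l, bpC_m] <;> omega)
    · exact Or.inr (bp_eq fun i hi => by interval_cases i <;> simp [bpB_l, bpB_m] <;> omega)
  · intro h
    have := h.2 0
    simp [bpC_l, bpC_m, bpD_l, bpD_m] at this
  · intro h
    have := h.1 2
    simp [bpC_l, bpC_m, bpD_l, bpD_m, Finset.sum_range_succ] at this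
  · rintro ⟨g, hga, hgb, hmax⟩
    have hcg : Bidom bpC g := hmax bpC hCA hCB
    have hdg : Bidom bpD g := hmax bpD hDA hDB
    obtain ⟨a1, a2, a3, b1, b2, b3, hsum⟩ := vals g
    have c0 := hcg.2 0; have c1 := hcg.2 1; have c2 := hcg.1 1
    have d2 := hdg.1 2
    have p1 := hga.2 1
    have q1 := hgb.1 1
    simp only [bpA_l, bpA_m, bpB_l, bpB_m, bpC_l, bpC_m, bpD_l, bpD_m, Finset.sum_range_succ, Finset.sum_range_zero] at c0 c1 c2 d2 p1 q1
    norm_num at c0 c1 c2 d2 p1 q1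
    omega
end

section
/- The poset (BP_3, ⊴) of bipartitions of 3 with the bidominance order is not graded: it contains maximal chains of two different lengths, namely maximal chains of length 6 and of length 7. -/
namespace SpechtBn

-- infrastructure
def mk6 (a b c : ℕ) : ℕ → ℕ := fun i => if i = 0 then a else if i = 1 then b else if i = 2 then c else 0

lemma mk6_ge3 (a b c : ℕ) {i : ℕ} (h : 3 ≤ i) : mk6 a b c i = 0 := by
  simp only [mk6]
  rw [if_neg (by omega), if_neg (by omega), if_neg (by omega)]

lemma sum_mk6 (a b c : ℕ) {k : ℕ} (hk : 3 ≤ k) :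
    ∑ j ∈ Finset.range k, mk6 a b c j = a + b + c := by
  rw [← Finset.sum_subset (Finset.range_subset_range.2 hk)
    (fun x _ hx => mk6_ge3 a b c (by simpa using hx))]
  simp [Finset.sum_range_succ, mk6]

lemma mkBP_aux (a b c d e f : ℕ)
    (h : b ≤ a ∧ c ≤ b ∧ e ≤ d ∧ f ≤ e ∧ a + b + c + d + e + f = 3) :
    IsBP 3 (mk6 a b c) (mk6 d e f) := by
  refine ⟨⟨?_, fun i hi => mk6_ge3 a b c hi⟩, ⟨?_, fun i hi => mk6_ge3 d e f hi⟩, ?_⟩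
  · intro i j hij; simp only [mk6]; split_ifs <;> omega
  · intro i j hij; simp only [mk6]; split_ifs <;> omega
  · simp [Finset.sum_range_succ, mk6]; omega

def mkBP (a b c d e f : ℕ)
    (h : b ≤ a ∧ c ≤ b ∧ e ≤ d ∧ f ≤ e ∧ a + b + c + d + e + f = 3) : Bipartition 3 :=
  ⟨mk6 a b c, mk6 d e f, mkBP_aux a b c d e f h⟩

lemma bidomFun_mk6_iff (a b c d e f a' b' c' d' e' f' : ℕ) :
    BidomFun (mk6 a b c) (mk6 d e f) (mk6 a' b' c') (mk6 d' e' f') ↔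
      (a ≤ a' ∧ a + d ≤ a' + d' ∧ a + d + b ≤ a' + d' + b' ∧
       a + d + b + e ≤ a' + d' + b' + e' ∧ a + d + b + e + c ≤ a' + d' + b' + e' + c' ∧
       a + d + b + e + c + f ≤ a' + d' + b' + e' + c' + f') := by
  constructor
  · rintro ⟨h1, h2⟩
    have g1 := h1 1; have g2 := h1 2; have g3 := h1 3
    have g4 := h2 0; have g5 := h2 1; have g6 := h2 2
    simp [Finset.sum_range_succ, mk6] at g1 g2 g3 g4 g5 g6
    omega
  · rintro ⟨h1, h2, h3, h4, h5, h6⟩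
    constructor
    · intro k
      match k with
      | 0 => simp
      | 1 => simp [Finset.sum_range_succ, mk6]; omega
      | 2 => simp [Finset.sum_range_succ, mk6]; omega
      | (k+3) =>
        have e1 : ∀ x y z u v w : ℕ, ∑ j ∈ Finset.range (k+3), (mk6 x y z j + mk6 u v w j)
            = x + u + y + v + z + w := by
          intro x y z u v w
          rw [← Finset.sum_subset (Finset.range_subset_range.2 (by omega : 3 ≤ k + 3))
            (fun i _ hi => by rw [mk6_ge3 _ _ _ (by simpa using hi),
              mk6_ge3 _ _ _ (by simpa using hi)]; rfl)]
          simp [Finset.sum_range_succ, mk6]; ring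
        rw [e1, e1]; omega
    · intro k
      match k with
      | 0 => simp [mk6]; omega
      | 1 => simp [Finset.sum_range_succ, mk6]; omega
      | 2 => simp [Finset.sum_range_succ, mk6]; omega
      | (k+3) =>
        have e1 : ∀ x y z u v w : ℕ, ∑ j ∈ Finset.range (k+3), (mk6 x y z j + mk6 u v w j)
            = x + u + y + v + z + w := by
          intro x y z u v w
          rw [← Finset.sum_subset (Finset.range_subset_range.2 (by omega : 3 ≤ k + 3))
            (fun i _ hi => by rw [mk6_ge3 _ _ _ (by simpa using hi),
              mk6_ge3 _ _ _ (by simpa using hi)]; rfl)]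
          simp [Finset.sum_range_succ, mk6]; ring
        rw [e1, e1, mk6_ge3 _ _ _ (by omega : 3 ≤ k+3), mk6_ge3 _ _ _ (by omega : 3 ≤ k+3)]
        omega

lemma bidom_mkBP_iff (a b c d e f a' b' c' d' e' f' : ℕ) (h h') :
    Bidom (mkBP a b c d e f h) (mkBP a' b' c' d' e' f' h') ↔
      (a ≤ a' ∧ a + d ≤ a' + d' ∧ a + d + b ≤ a' + d' + b' ∧
       a + d + b + e ≤ a' + d' + b' + e' ∧ a + d + b + e + c ≤ a' + d' + b' + e' + c' ∧
       a + d + b + e + c + f ≤ a' + d' + b' + e' + c' + f') :=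
  bidomFun_mk6_iff a b c d e f a' b' c' d' e' f'

lemma mkBP_inj {a b c d e f a' b' c' d' e' f' : ℕ} {h h'}
    (he : mkBP a b c d e f h = mkBP a' b' c' d' e' f' h') :
    a = a' ∧ b = b' ∧ c = c' ∧ d = d' ∧ e = e' ∧ f = f' := by
  have hl := congrArg Bipartition.l he
  have hm := congrArg Bipartition.m he
  refine ⟨?_, ?_, ?_, ?_, ?_, ?_⟩
  · simpa [mkBP, mk6] using congrFun hl 0
  · simpa [mkBP, mk6] using congrFun hl 1
  · simpa [mkBP, mk6] using congrFun hl 2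
  · simpa [mkBP, mk6] using congrFun hm 0
  · simpa [mkBP, mk6] using congrFun hm 1
  · simpa [mkBP, mk6] using congrFun hm 2

lemma bp_ext {p q : Bipartition 3} (hl : p.l = q.l) (hm : p.m = q.m) : p = q := by
  cases p; cases q; cases hl; cases hm; rfl

def p0 : Bipartition 3 := mkBP 0 0 0 1 1 1 (by omega)
def p1 : Bipartition 3 := mkBP 0 0 0 2 1 0 (by omega)
def p2 : Bipartition 3 := mkBP 0 0 0 3 0 0 (by omega)
def p3 : Bipartition 3 := mkBP 1 0 0 2 0 0 (by omega)
def p4 : Bipartition 3 := mkBP 2 0 0 1 0 0 (by omega)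
def p5 : Bipartition 3 := mkBP 3 0 0 0 0 0 (by omega)
def p6 : Bipartition 3 := mkBP 1 0 0 1 1 0 (by omega)
def p7 : Bipartition 3 := mkBP 1 1 0 1 0 0 (by omega)
def p8 : Bipartition 3 := mkBP 2 1 0 0 0 0 (by omega)
def p9 : Bipartition 3 := mkBP 1 1 1 0 0 0 (by omega)

set_option maxHeartbeats 4000000 in
lemma tuple_classify (a b c d e f : ℕ) (h1 : b ≤ a) (h2 : c ≤ b) (h3 : e ≤ d)
    (h4 : f ≤ e) (h5 : a+b+c+d+e+f=3) :
    (a=0∧b=0∧c=0∧d=1∧e=1∧f=1) ∨ (a=0∧b=0∧c=0∧d=2∧e=1∧f=0) ∨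
    (a=0∧b=0∧c=0∧d=3∧e=0∧f=0) ∨ (a=1∧b=0∧c=0∧d=2∧e=0∧f=0) ∨
    (a=2∧b=0∧c=0∧d=1∧e=0∧f=0) ∨ (a=3∧b=0∧c=0∧d=0∧e=0∧f=0) ∨
    (a=1∧b=0∧c=0∧d=1∧e=1∧f=0) ∨ (a=1∧b=1∧c=0∧d=1∧e=0∧f=0) ∨
    (a=2∧b=1∧c=0∧d=0∧e=0∧f=0) ∨ (a=1∧b=1∧c=1∧d=0∧e=0∧f=0) := by
  have ha : a ≤ 3 := by omega
  have hd : d ≤ 3 := by omega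
  interval_cases a <;> interval_cases b <;> interval_cases c <;> interval_cases d <;>
    interval_cases e <;> interval_cases f <;> revert h5 <;> decide

set_option maxHeartbeats 1000000 in
lemma classify (r : Bipartition 3) :
    r = p0 ∨ r = p1 ∨ r = p2 ∨ r = p3 ∨ r = p4 ∨ r = p5 ∨ r = p6 ∨ r = p7 ∨ r = p8 ∨ r = p9 := by
  obtain ⟨⟨hla, hlz⟩, ⟨hma, hmz⟩, hs⟩ := r.isBP
  have hl : r.l = mk6 (r.l 0) (r.l 1) (r.l 2) := by
    funext i
    simp only [mk6]
    split_ifs with h1 h2 h3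
    · rw [h1]
    · rw [h2]
    · rw [h3]
    · exact hlz i (by omega)
  have hm : r.m = mk6 (r.m 0) (r.m 1) (r.m 2) := by
    funext i
    simp only [mk6]
    split_ifs with h1 h2 h3
    · rw [h1]
    · rw [h2]
    · rw [h3]
    · exact hmz i (by omega)
  have c1 : r.l 1 ≤ r.l 0 := hla (by omega)
  have c2 : r.l 2 ≤ r.l 1 := hla (by omega)
  have c3 : r.m 1 ≤ r.m 0 := hma (by omega)
  have c4 : r.m 2 ≤ r.m 1 := hma (by omega)
  have c5 : r.l 0 + r.l 1 + r.l 2 + r.m 0 + r.m 1 + r.m 2 = 3 := by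
    simp [Finset.sum_range_succ] at hs; omega
  have key : (r.l 0=0∧r.l 1=0∧r.l 2=0∧r.m 0=1∧r.m 1=1∧r.m 2=1) ∨
      (r.l 0=0∧r.l 1=0∧r.l 2=0∧r.m 0=2∧r.m 1=1∧r.m 2=0) ∨
      (r.l 0=0∧r.l 1=0∧r.l 2=0∧r.m 0=3∧r.m 1=0∧r.m 2=0) ∨
      (r.l 0=1∧r.l 1=0∧r.l 2=0∧r.m 0=2∧r.m 1=0∧r.m 2=0) ∨
      (r.l 0=2∧r.l 1=0∧r.l 2=0∧r.m 0=1∧r.m 1=0∧r.m 2=0) ∨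
      (r.l 0=3∧r.l 1=0∧r.l 2=0∧r.m 0=0∧r.m 1=0∧r.m 2=0) ∨
      (r.l 0=1∧r.l 1=0∧r.l 2=0∧r.m 0=1∧r.m 1=1∧r.m 2=0) ∨
      (r.l 0=1∧r.l 1=1∧r.l 2=0∧r.m 0=1∧r.m 1=0∧r.m 2=0) ∨
      (r.l 0=2∧r.l 1=1∧r.l 2=0∧r.m 0=0∧r.m 1=0∧r.m 2=0) ∨
      (r.l 0=1∧r.l 1=1∧r.l 2=1∧r.m 0=0∧r.m 1=0∧r.m 2=0) :=
    tuple_classify _ _ _ _ _ _ c1 c2 c3 c4 c5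
  rcases key with ⟨q1,q2,q3,q4,q5,q6⟩|⟨q1,q2,q3,q4,q5,q6⟩|⟨q1,q2,q3,q4,q5,q6⟩|⟨q1,q2,q3,q4,q5,q6⟩|⟨q1,q2,q3,q4,q5,q6⟩|⟨q1,q2,q3,q4,q5,q6⟩|⟨q1,q2,q3,q4,q5,q6⟩|⟨q1,q2,q3,q4,q5,q6⟩|⟨q1,q2,q3,q4,q5,q6⟩|⟨q1,q2,q3,q4,q5,q6⟩ <;>
    rw [q1, q2, q3] at hl <;> rw [q4, q5, q6] at hm
  · exact Or.inl (bp_ext hl hm)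
  · exact Or.inr (Or.inl (bp_ext hl hm))
  · exact Or.inr (Or.inr (Or.inl (bp_ext hl hm)))
  · exact Or.inr (Or.inr (Or.inr (Or.inl (bp_ext hl hm))))
  · exact Or.inr (Or.inr (Or.inr (Or.inr (Or.inl (bp_ext hl hm)))))
  · exact Or.inr (Or.inr (Or.inr (Or.inr (Or.inr (Or.inl (bp_ext hl hm))))))
  · exact Or.inr (Or.inr (Or.inr (Or.inr (Or.inr (Or.inr (Or.inl (bp_ext hl hm)))))))
  · exact Or.inr (Or.inr (Or.inr (Or.inr (Or.inr (Or.inr (Or.inr (Or.inl (bp_ext hl hm))))))))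
  · exact Or.inr (Or.inr (Or.inr (Or.inr (Or.inr (Or.inr (Or.inr (Or.inr (Or.inl (bp_ext hl hm)))))))))
  · exact Or.inr (Or.inr (Or.inr (Or.inr (Or.inr (Or.inr (Or.inr (Or.inr (Or.inr (bp_ext hl hm)))))))))

end SpechtBn

section Aux
open SpechtBn
lemma ne01 : p0 ≠ p1 := fun h => by have := mkBP_inj h; omega
lemma ne02 : p0 ≠ p2 := fun h => by have := mkBP_inj h; omega
lemma ne03 : p0 ≠ p3 := fun h => by have := mkBP_inj h; omega
lemma ne04 : p0 ≠ p4 := fun h => by have := mkBP_inj h; omega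
lemma ne05 : p0 ≠ p5 := fun h => by have := mkBP_inj h; omega
lemma ne06 : p0 ≠ p6 := fun h => by have := mkBP_inj h; omega
lemma ne07 : p0 ≠ p7 := fun h => by have := mkBP_inj h; omega
lemma ne08 : p0 ≠ p8 := fun h => by have := mkBP_inj h; omega
lemma ne09 : p0 ≠ p9 := fun h => by have := mkBP_inj h; omega
lemma ne12 : p1 ≠ p2 := fun h => by have := mkBP_inj h; omega
lemma ne13 : p1 ≠ p3 := fun h => by have := mkBP_inj h; omega
lemma ne14 : p1 ≠ p4 := fun h => by have := mkBP_inj h; omega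
lemma ne15 : p1 ≠ p5 := fun h => by have := mkBP_inj h; omega
lemma ne16 : p1 ≠ p6 := fun h => by have := mkBP_inj h; omega
lemma ne17 : p1 ≠ p7 := fun h => by have := mkBP_inj h; omega
lemma ne18 : p1 ≠ p8 := fun h => by have := mkBP_inj h; omega
lemma ne19 : p1 ≠ p9 := fun h => by have := mkBP_inj h; omega
lemma ne23 : p2 ≠ p3 := fun h => by have := mkBP_inj h; omega
lemma ne24 : p2 ≠ p4 := fun h => by have := mkBP_inj h; omega
lemma ne25 : p2 ≠ p5 := fun h => by have := mkBP_inj h; omega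
lemma ne26 : p2 ≠ p6 := fun h => by have := mkBP_inj h; omega
lemma ne27 : p2 ≠ p7 := fun h => by have := mkBP_inj h; omega
lemma ne28 : p2 ≠ p8 := fun h => by have := mkBP_inj h; omega
lemma ne29 : p2 ≠ p9 := fun h => by have := mkBP_inj h; omega
lemma ne34 : p3 ≠ p4 := fun h => by have := mkBP_inj h; omega
lemma ne35 : p3 ≠ p5 := fun h => by have := mkBP_inj h; omega
lemma ne36 : p3 ≠ p6 := fun h => by have := mkBP_inj h; omega
lemma ne37 : p3 ≠ p7 := fun h => by have := mkBP_inj h; omega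
lemma ne38 : p3 ≠ p8 := fun h => by have := mkBP_inj h; omega
lemma ne39 : p3 ≠ p9 := fun h => by have := mkBP_inj h; omega
lemma ne45 : p4 ≠ p5 := fun h => by have := mkBP_inj h; omega
lemma ne46 : p4 ≠ p6 := fun h => by have := mkBP_inj h; omega
lemma ne47 : p4 ≠ p7 := fun h => by have := mkBP_inj h; omega
lemma ne48 : p4 ≠ p8 := fun h => by have := mkBP_inj h; omega
lemma ne49 : p4 ≠ p9 := fun h => by have := mkBP_inj h; omega
lemma ne56 : p5 ≠ p6 := fun h => by have := mkBP_inj h; omega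
lemma ne57 : p5 ≠ p7 := fun h => by have := mkBP_inj h; omega
lemma ne58 : p5 ≠ p8 := fun h => by have := mkBP_inj h; omega
lemma ne59 : p5 ≠ p9 := fun h => by have := mkBP_inj h; omega
lemma ne67 : p6 ≠ p7 := fun h => by have := mkBP_inj h; omega
lemma ne68 : p6 ≠ p8 := fun h => by have := mkBP_inj h; omega
lemma ne69 : p6 ≠ p9 := fun h => by have := mkBP_inj h; omega
lemma ne78 : p7 ≠ p8 := fun h => by have := mkBP_inj h; omega
lemma ne79 : p7 ≠ p9 := fun h => by have := mkBP_inj h; omega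
lemma ne89 : p8 ≠ p9 := fun h => by have := mkBP_inj h; omega
lemma b01 : Bidom p0 p1 := (bidom_mkBP_iff 0 0 0 1 1 1 0 0 0 2 1 0 _ _).mpr (by omega)
lemma b02 : Bidom p0 p2 := (bidom_mkBP_iff 0 0 0 1 1 1 0 0 0 3 0 0 _ _).mpr (by omega)
lemma b03 : Bidom p0 p3 := (bidom_mkBP_iff 0 0 0 1 1 1 1 0 0 2 0 0 _ _).mpr (by omega)
lemma b04 : Bidom p0 p4 := (bidom_mkBP_iff 0 0 0 1 1 1 2 0 0 1 0 0 _ _).mpr (by omega)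
lemma b05 : Bidom p0 p5 := (bidom_mkBP_iff 0 0 0 1 1 1 3 0 0 0 0 0 _ _).mpr (by omega)
lemma b06 : Bidom p0 p6 := (bidom_mkBP_iff 0 0 0 1 1 1 1 0 0 1 1 0 _ _).mpr (by omega)
lemma b07 : Bidom p0 p7 := (bidom_mkBP_iff 0 0 0 1 1 1 1 1 0 1 0 0 _ _).mpr (by omega)
lemma b08 : Bidom p0 p8 := (bidom_mkBP_iff 0 0 0 1 1 1 2 1 0 0 0 0 _ _).mpr (by omega)
lemma b09 : Bidom p0 p9 := (bidom_mkBP_iff 0 0 0 1 1 1 1 1 1 0 0 0 _ _).mpr (by omega)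
lemma b12 : Bidom p1 p2 := (bidom_mkBP_iff 0 0 0 2 1 0 0 0 0 3 0 0 _ _).mpr (by omega)
lemma b13 : Bidom p1 p3 := (bidom_mkBP_iff 0 0 0 2 1 0 1 0 0 2 0 0 _ _).mpr (by omega)
lemma b14 : Bidom p1 p4 := (bidom_mkBP_iff 0 0 0 2 1 0 2 0 0 1 0 0 _ _).mpr (by omega)
lemma b15 : Bidom p1 p5 := (bidom_mkBP_iff 0 0 0 2 1 0 3 0 0 0 0 0 _ _).mpr (by omega)
lemma b16 : Bidom p1 p6 := (bidom_mkBP_iff 0 0 0 2 1 0 1 0 0 1 1 0 _ _).mpr (by omega)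
lemma b17 : Bidom p1 p7 := (bidom_mkBP_iff 0 0 0 2 1 0 1 1 0 1 0 0 _ _).mpr (by omega)
lemma b18 : Bidom p1 p8 := (bidom_mkBP_iff 0 0 0 2 1 0 2 1 0 0 0 0 _ _).mpr (by omega)
lemma b23 : Bidom p2 p3 := (bidom_mkBP_iff 0 0 0 3 0 0 1 0 0 2 0 0 _ _).mpr (by omega)
lemma b24 : Bidom p2 p4 := (bidom_mkBP_iff 0 0 0 3 0 0 2 0 0 1 0 0 _ _).mpr (by omega)
lemma b25 : Bidom p2 p5 := (bidom_mkBP_iff 0 0 0 3 0 0 3 0 0 0 0 0 _ _).mpr (by omega)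
lemma b34 : Bidom p3 p4 := (bidom_mkBP_iff 1 0 0 2 0 0 2 0 0 1 0 0 _ _).mpr (by omega)
lemma b35 : Bidom p3 p5 := (bidom_mkBP_iff 1 0 0 2 0 0 3 0 0 0 0 0 _ _).mpr (by omega)
lemma b45 : Bidom p4 p5 := (bidom_mkBP_iff 2 0 0 1 0 0 3 0 0 0 0 0 _ _).mpr (by omega)
lemma b63 : Bidom p6 p3 := (bidom_mkBP_iff 1 0 0 1 1 0 1 0 0 2 0 0 _ _).mpr (by omega)
lemma b64 : Bidom p6 p4 := (bidom_mkBP_iff 1 0 0 1 1 0 2 0 0 1 0 0 _ _).mpr (by omega)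
lemma b65 : Bidom p6 p5 := (bidom_mkBP_iff 1 0 0 1 1 0 3 0 0 0 0 0 _ _).mpr (by omega)
lemma b67 : Bidom p6 p7 := (bidom_mkBP_iff 1 0 0 1 1 0 1 1 0 1 0 0 _ _).mpr (by omega)
lemma b68 : Bidom p6 p8 := (bidom_mkBP_iff 1 0 0 1 1 0 2 1 0 0 0 0 _ _).mpr (by omega)
lemma b73 : Bidom p7 p3 := (bidom_mkBP_iff 1 1 0 1 0 0 1 0 0 2 0 0 _ _).mpr (by omega)
lemma b74 : Bidom p7 p4 := (bidom_mkBP_iff 1 1 0 1 0 0 2 0 0 1 0 0 _ _).mpr (by omega)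
lemma b75 : Bidom p7 p5 := (bidom_mkBP_iff 1 1 0 1 0 0 3 0 0 0 0 0 _ _).mpr (by omega)
lemma b78 : Bidom p7 p8 := (bidom_mkBP_iff 1 1 0 1 0 0 2 1 0 0 0 0 _ _).mpr (by omega)
lemma b84 : Bidom p8 p4 := (bidom_mkBP_iff 2 1 0 0 0 0 2 0 0 1 0 0 _ _).mpr (by omega)
lemma b85 : Bidom p8 p5 := (bidom_mkBP_iff 2 1 0 0 0 0 3 0 0 0 0 0 _ _).mpr (by omega)
lemma b93 : Bidom p9 p3 := (bidom_mkBP_iff 1 1 1 0 0 0 1 0 0 2 0 0 _ _).mpr (by omega)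
lemma b94 : Bidom p9 p4 := (bidom_mkBP_iff 1 1 1 0 0 0 2 0 0 1 0 0 _ _).mpr (by omega)
lemma b95 : Bidom p9 p5 := (bidom_mkBP_iff 1 1 1 0 0 0 3 0 0 0 0 0 _ _).mpr (by omega)
lemma b96 : Bidom p9 p6 := (bidom_mkBP_iff 1 1 1 0 0 0 1 0 0 1 1 0 _ _).mpr (by omega)
lemma b97 : Bidom p9 p7 := (bidom_mkBP_iff 1 1 1 0 0 0 1 1 0 1 0 0 _ _).mpr (by omega)
lemma b98 : Bidom p9 p8 := (bidom_mkBP_iff 1 1 1 0 0 0 2 1 0 0 0 0 _ _).mpr (by omega)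
lemma nb62 : ¬ Bidom p6 p2 := fun h => by have := (bidom_mkBP_iff 1 0 0 1 1 0 0 0 0 3 0 0 _ _).mp h; omega
lemma nb26 : ¬ Bidom p2 p6 := fun h => by have := (bidom_mkBP_iff 0 0 0 3 0 0 1 0 0 1 1 0 _ _).mp h; omega
lemma nb72 : ¬ Bidom p7 p2 := fun h => by have := (bidom_mkBP_iff 1 1 0 1 0 0 0 0 0 3 0 0 _ _).mp h; omega
lemma nb27 : ¬ Bidom p2 p7 := fun h => by have := (bidom_mkBP_iff 0 0 0 3 0 0 1 1 0 1 0 0 _ _).mp h; omega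
lemma nb82 : ¬ Bidom p8 p2 := fun h => by have := (bidom_mkBP_iff 2 1 0 0 0 0 0 0 0 3 0 0 _ _).mp h; omega
lemma nb28 : ¬ Bidom p2 p8 := fun h => by have := (bidom_mkBP_iff 0 0 0 3 0 0 2 1 0 0 0 0 _ _).mp h; omega
lemma nb91 : ¬ Bidom p9 p1 := fun h => by have := (bidom_mkBP_iff 1 1 1 0 0 0 0 0 0 2 1 0 _ _).mp h; omega
lemma nb19 : ¬ Bidom p1 p9 := fun h => by have := (bidom_mkBP_iff 0 0 0 2 1 0 1 1 1 0 0 0 _ _).mp h; omega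
lemma nb83 : ¬ Bidom p8 p3 := fun h => by have := (bidom_mkBP_iff 2 1 0 0 0 0 1 0 0 2 0 0 _ _).mp h; omega
lemma nb38 : ¬ Bidom p3 p8 := fun h => by have := (bidom_mkBP_iff 1 0 0 2 0 0 2 1 0 0 0 0 _ _).mp h; omega
end Aux

set_option maxHeartbeats 4000000 in
open SpechtBn in
/-- `(BP₃, ⊴)` is not graded: it has maximal chains with 6 elements and with
7 elements. -/
theorem bp3_not_graded :
    ∃ C₁ C₂ : Set (Bipartition 3),
      (IsChain (fun p q => Bidom p q) C₁ ∧
        (∀ C' : Set (Bipartition 3),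
            IsChain (fun p q => Bidom p q) C' → C₁ ⊆ C' → C' = C₁) ∧
        C₁.ncard = 6) ∧
      (IsChain (fun p q => Bidom p q) C₂ ∧
        (∀ C' : Set (Bipartition 3),
            IsChain (fun p q => Bidom p q) C' → C₂ ⊆ C' → C' = C₂) ∧
        C₂.ncard = 7) := by
  refine ⟨{p0, p1, p2, p3, p4, p5}, {p0, p1, p6, p7, p3, p4, p5}, ⟨?_, ?_, ?_⟩, ⟨?_, ?_, ?_⟩⟩
  · intro x hx y hy hne
    simp only [Set.mem_insert_iff, Set.mem_singleton_iff] at hx hy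
    rcases hx with rfl|rfl|rfl|rfl|rfl|rfl <;> rcases hy with rfl|rfl|rfl|rfl|rfl|rfl <;>
      first
      | exact absurd rfl hne
      | exact Or.inl b01
      | exact Or.inr b01
      | exact Or.inl b02
      | exact Or.inr b02
      | exact Or.inl b03
      | exact Or.inr b03
      | exact Or.inl b04
      | exact Or.inr b04
      | exact Or.inl b05
      | exact Or.inr b05
      | exact Or.inl b12
      | exact Or.inr b12
      | exact Or.inl b13
      | exact Or.inr b13
      | exact Or.inl b14
      | exact Or.inr b14
      | exact Or.inl b15
      | exact Or.inr b15
      | exact Or.inl b23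
      | exact Or.inr b23
      | exact Or.inl b24
      | exact Or.inr b24
      | exact Or.inl b25
      | exact Or.inr b25
      | exact Or.inl b34
      | exact Or.inr b34
      | exact Or.inl b35
      | exact Or.inr b35
      | exact Or.inl b45
      | exact Or.inr b45
  · intro C' hC' hsub
    ext x
    constructor
    · intro hx
      have m0 : p0 ∈ C' := hsub (by simp only [Set.mem_insert_iff, Set.mem_singleton_iff]; tauto)
      have m1 : p1 ∈ C' := hsub (by simp only [Set.mem_insert_iff, Set.mem_singleton_iff]; tauto)
      have m2 : p2 ∈ C' := hsub (by simp only [Set.mem_insert_iff, Set.mem_singleton_iff]; tauto)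
      rcases classify x with rfl|rfl|rfl|rfl|rfl|rfl|rfl|rfl|rfl|rfl
      · simp only [Set.mem_insert_iff, Set.mem_singleton_iff]; tauto
      · simp only [Set.mem_insert_iff, Set.mem_singleton_iff]; tauto
      · simp only [Set.mem_insert_iff, Set.mem_singleton_iff]; tauto
      · simp only [Set.mem_insert_iff, Set.mem_singleton_iff]; tauto
      · simp only [Set.mem_insert_iff, Set.mem_singleton_iff]; tauto
      · simp only [Set.mem_insert_iff, Set.mem_singleton_iff]; tauto
      · rcases hC' hx m2 (Ne.symm ne26) with h|h
        · exact absurd h nb62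
        · exact absurd h nb26
      · rcases hC' hx m2 (Ne.symm ne27) with h|h
        · exact absurd h nb72
        · exact absurd h nb27
      · rcases hC' hx m2 (Ne.symm ne28) with h|h
        · exact absurd h nb82
        · exact absurd h nb28
      · rcases hC' hx m1 (Ne.symm ne19) with h|h
        · exact absurd h nb91
        · exact absurd h nb19
    · intro hx; exact hsub hx
  · rw [Set.ncard_insert_of_notMem (by
        simp only [Set.mem_insert_iff, Set.mem_singleton_iff]; push_neg
        exact ⟨ne01, ne02, ne03, ne04, ne05⟩),
      Set.ncard_insert_of_notMem (by
        simp only [Set.mem_insert_iff, Set.mem_singleton_iff]; push_neg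
        exact ⟨ne12, ne13, ne14, ne15⟩),
      Set.ncard_insert_of_notMem (by
        simp only [Set.mem_insert_iff, Set.mem_singleton_iff]; push_neg
        exact ⟨ne23, ne24, ne25⟩),
      Set.ncard_insert_of_notMem (by
        simp only [Set.mem_insert_iff, Set.mem_singleton_iff]; push_neg
        exact ⟨ne34, ne35⟩),
      Set.ncard_insert_of_notMem (by
        simp only [Set.mem_singleton_iff]; exact ne45),
      Set.ncard_singleton]
  · intro x hx y hy hne
    simp only [Set.mem_insert_iff, Set.mem_singleton_iff] at hx hy
    rcases hx with rfl|rfl|rfl|rfl|rfl|rfl|rfl <;> rcases hy with rfl|rfl|rfl|rfl|rfl|rfl|rfl <;>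
      first
      | exact absurd rfl hne
      | exact Or.inl b01
      | exact Or.inr b01
      | exact Or.inl b06
      | exact Or.inr b06
      | exact Or.inl b07
      | exact Or.inr b07
      | exact Or.inl b03
      | exact Or.inr b03
      | exact Or.inl b04
      | exact Or.inr b04
      | exact Or.inl b05
      | exact Or.inr b05
      | exact Or.inl b16
      | exact Or.inr b16
      | exact Or.inl b17
      | exact Or.inr b17
      | exact Or.inl b13
      | exact Or.inr b13
      | exact Or.inl b14
      | exact Or.inr b14
      | exact Or.inl b15
      | exact Or.inr b15
      | exact Or.inl b67
      | exact Or.inr b67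
      | exact Or.inl b63
      | exact Or.inr b63
      | exact Or.inl b64
      | exact Or.inr b64
      | exact Or.inl b65
      | exact Or.inr b65
      | exact Or.inl b73
      | exact Or.inr b73
      | exact Or.inl b74
      | exact Or.inr b74
      | exact Or.inl b75
      | exact Or.inr b75
      | exact Or.inl b34
      | exact Or.inr b34
      | exact Or.inl b35
      | exact Or.inr b35
      | exact Or.inl b45
      | exact Or.inr b45
  · intro C' hC' hsub
    ext x
    constructor
    · intro hx
      have m1 : p1 ∈ C' := hsub (by simp only [Set.mem_insert_iff, Set.mem_singleton_iff]; tauto)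
      have m3 : p3 ∈ C' := hsub (by simp only [Set.mem_insert_iff, Set.mem_singleton_iff]; tauto)
      have m6 : p6 ∈ C' := hsub (by simp only [Set.mem_insert_iff, Set.mem_singleton_iff]; tauto)
      rcases classify x with rfl|rfl|rfl|rfl|rfl|rfl|rfl|rfl|rfl|rfl
      · simp only [Set.mem_insert_iff, Set.mem_singleton_iff]; tauto
      · simp only [Set.mem_insert_iff, Set.mem_singleton_iff]; tauto
      · rcases hC' hx m6 (Ne.symm ne26).symm with h|h
        · exact absurd h nb26
        · exact absurd h nb62
      · simp only [Set.mem_insert_iff, Set.mem_singleton_iff]; tauto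
      · simp only [Set.mem_insert_iff, Set.mem_singleton_iff]; tauto
      · simp only [Set.mem_insert_iff, Set.mem_singleton_iff]; tauto
      · simp only [Set.mem_insert_iff, Set.mem_singleton_iff]; tauto
      · simp only [Set.mem_insert_iff, Set.mem_singleton_iff]; tauto
      · rcases hC' hx m3 (Ne.symm ne38) with h|h
        · exact absurd h nb83
        · exact absurd h nb38
      · rcases hC' hx m1 (Ne.symm ne19) with h|h
        · exact absurd h nb91
        · exact absurd h nb19
    · intro hx; exact hsub hx
  · rw [Set.ncard_insert_of_notMem (by
        simp only [Set.mem_insert_iff, Set.mem_singleton_iff]; push_neg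
        exact ⟨ne01, ne06, ne07, ne03, ne04, ne05⟩),
      Set.ncard_insert_of_notMem (by
        simp only [Set.mem_insert_iff, Set.mem_singleton_iff]; push_neg
        exact ⟨ne16, ne17, ne13, ne14, ne15⟩),
      Set.ncard_insert_of_notMem (by
        simp only [Set.mem_insert_iff, Set.mem_singleton_iff]; push_neg
        exact ⟨ne67, ne36.symm, ne46.symm, ne56.symm⟩),
      Set.ncard_insert_of_notMem (by
        simp only [Set.mem_insert_iff, Set.mem_singleton_iff]; push_neg
        exact ⟨ne37.symm, ne47.symm, ne57.symm⟩),
      Set.ncard_insert_of_notMem (by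
        simp only [Set.mem_insert_iff, Set.mem_singleton_iff]; push_neg
        exact ⟨ne34, ne35⟩),
      Set.ncard_insert_of_notMem (by
        simp only [Set.mem_singleton_iff]; exact ne45),
      Set.ncard_singleton]
end
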